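/- arXiv:2510.06159 — 9 statements merged into one kernel-verified Lean document; each statement's English description precedes it below -/
import Mathlib

section
/- Let G be a finite simple graph with maximum vertex degree at most z (z ≥ 1 an integer) and let S be a nonempty subset of its vertices. For an integer s ≥ |S|, let M_z(s, S) denote the number of vertex subsets T with |T| = s and S ⊆ T such that every connected component of the induced subgraph G[T] contains at least one vertex of S. Then M_z(s, S) ≤ e^{|S|−1} · (z·e)^{s−|S|}, where e is Euler's number. -/
/-!
Remove a vertex `v ∈ S` from such a set `T`: every component of what is left contains a vertex
of `S \ {v}` or a neighbour of `v` in `T \ S`. Hence `T` is determined by a set `A` of at most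
`z` neighbours of `v` together with a set of size `s - 1` anchored at `(S \ {v}) ∪ A`. By
induction on `s`, `e z^|S| M(s, S) ≤ (z e)^s`: the inductive step sums `z^(-|A|)` over all `A`,
which gives `(1 + 1/z)^z ≤ e`.
-/

open Finset Real

namespace SimpleGraph

variable {V : Type*} {G : SimpleGraph V}

lemma mem_of_reachable_induce {T U : Finset V} (hU : ∀ x ∈ U, ∀ y ∈ T, G.Adj x y → y ∈ U)
    {a b : (T : Set V)} (hab : (G.induce (T : Set V)).Reachable a b) (ha : (a : V) ∈ U) :
    (b : V) ∈ U := by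
  obtain ⟨p⟩ := hab
  induction p with
  | nil => exact ha
  | cons hxy _ ih => exact ih (hU _ ha _ (Finset.mem_coe.1 (Subtype.prop _)) hxy)

variable (G) [Fintype V]

open Classical in
/-- The sets `T ⊇ S` of size `s` such that every component of `G[T]` meets `S`, phrased without
walks: no nonempty `U ⊆ T \ S` is closed under adjacency inside `T`. -/
noncomputable def anchoredSets (S : Finset V) (s : ℕ) : Finset (Finset V) :=
  {T | #T = s ∧ S ⊆ T ∧
    ∀ U ⊆ T, Disjoint U S → (∀ x ∈ U, ∀ y ∈ T, G.Adj x y → y ∈ U) → U = ∅}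

variable {G} {S T : Finset V} {s : ℕ}

@[simp]
lemma mem_anchoredSets : T ∈ G.anchoredSets S s ↔ #T = s ∧ S ⊆ T ∧
    ∀ U ⊆ T, Disjoint U S → (∀ x ∈ U, ∀ y ∈ T, G.Adj x y → y ∈ U) → U = ∅ := by
  simp [anchoredSets]

lemma mem_anchoredSets_of_reachable (hTs : #T = s) (hST : S ⊆ T)
    (hreach : ∀ v, ∀ hv : v ∈ T, ∃ u, ∃ hu : u ∈ T, u ∈ S ∧
      (G.induce (T : Set V)).Reachable ⟨v, Finset.mem_coe.mpr hv⟩ ⟨u, Finset.mem_coe.mpr hu⟩) :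
    T ∈ G.anchoredSets S s := by
  refine mem_anchoredSets.2
    ⟨hTs, hST, fun U hUT hUS hUc => eq_empty_of_forall_notMem fun x hx => ?_⟩
  obtain ⟨u, hu, huS, hxu⟩ := hreach x (hUT hx)
  exact Finset.disjoint_left.1 hUS (mem_of_reachable_induce hUc hxu hx) huS

lemma anchoredSets_zero (hS : S.Nonempty) : G.anchoredSets S 0 = ∅ := by
  ext T
  simp only [mem_anchoredSets, card_eq_zero, notMem_empty, iff_false]
  rintro ⟨rfl, hST, -⟩
  exact hS.ne_empty (subset_empty.1 hST)

lemma anchoredSets_empty (hs : s ≠ 0) : G.anchoredSets ∅ s = ∅ := by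
  ext T
  simp only [mem_anchoredSets, notMem_empty, iff_false]
  rintro ⟨rfl, -, hT⟩
  exact hs (card_eq_zero.2 (hT T subset_rfl (disjoint_empty_right T) fun _ _ _ hy _ => hy))

lemma eq_of_mem_anchoredSets (hT : T ∈ G.anchoredSets S s) (hs : s ≤ #S) : T = S ∧ #S = s := by
  obtain ⟨rfl, hST, -⟩ := mem_anchoredSets.1 hT
  obtain rfl := (eq_of_subset_of_card_le hST hs).symm
  exact ⟨rfl, rfl⟩

lemma exp_mul_pow_mul_card_anchoredSets_le_of_le (z : ℕ) (hS : S.Nonempty) (hs : s ≤ #S) :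
    exp 1 * z ^ #S * #(G.anchoredSets S s) ≤ (z * exp 1) ^ s := by
  obtain hF | ⟨T, hT⟩ := (G.anchoredSets S s).eq_empty_or_nonempty
  · rw [hF, card_empty, Nat.cast_zero, mul_zero]
    positivity
  obtain ⟨rfl, hSs⟩ := eq_of_mem_anchoredSets hT hs
  have hcard : #(G.anchoredSets T s) ≤ 1 :=
    card_le_one.2 fun A hA B hB => (eq_of_mem_anchoredSets hA hs).1.trans
      (eq_of_mem_anchoredSets hB hs).1.symm
  have he : exp 1 ≤ exp 1 ^ s :=
    le_self_pow₀ (one_le_exp zero_le_one) (hSs ▸ hS.card_pos.ne')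
  calc exp 1 * z ^ #T * #(G.anchoredSets T s) ≤ exp 1 ^ s * z ^ s * 1 := by
        rw [hSs]; gcongr; exact_mod_cast hcard
    _ = (z * exp 1) ^ s := by ring

lemma sum_inv_pow_card_powerset_le_exp_one {ι : Type*} (N : Finset ι) {z : ℕ} (hN : #N ≤ z) :
    ∑ A ∈ N.powerset, ((z : ℝ)⁻¹) ^ #A ≤ exp 1 := by
  have hsum : ∑ A ∈ N.powerset, ((z : ℝ)⁻¹) ^ #A = (1 + (z : ℝ)⁻¹) ^ #N := by
    simpa [add_comm] using sum_pow_mul_eq_add_pow ((z : ℝ)⁻¹) 1 N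
  calc ∑ A ∈ N.powerset, ((z : ℝ)⁻¹) ^ #A = (1 + (z : ℝ)⁻¹) ^ #N := hsum
    _ ≤ (1 + (z : ℝ)⁻¹) ^ z := pow_le_pow_right₀ (le_add_of_nonneg_right (by positivity)) hN
    _ ≤ exp 1 := one_add_inv_pow_le_exp

lemma anchoredSets_succ_subset [DecidableEq V] [DecidableRel G.Adj] {v : V} (hv : v ∈ S) :
    G.anchoredSets S (s + 1) ⊆ (G.neighborFinset v \ S).powerset.biUnion
      fun A => (G.anchoredSets (S.erase v ∪ A) s).image (insert v) := by
  intro T hT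
  obtain ⟨hTs, hST, hT⟩ := mem_anchoredSets.1 hT
  have hvT : v ∈ T := hST hv
  simp only [mem_biUnion, mem_powerset, mem_image]
  refine ⟨T ∩ (G.neighborFinset v \ S), inter_subset_right, T.erase v, ?_, insert_erase hvT⟩
  refine mem_anchoredSets.2 ⟨by rw [card_erase_of_mem hvT, hTs]; rfl, ?_, ?_⟩
  · intro w hw
    simp only [mem_union, mem_erase, mem_inter, mem_sdiff] at hw
    rcases hw with ⟨hwv, hwS⟩ | ⟨hwT, -, hwS⟩
    · exact mem_erase.2 ⟨hwv, hST hwS⟩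
    · exact mem_erase.2 ⟨fun h => hwS (h ▸ hv), hwT⟩
  · intro U hU hUS hUc
    have hUS' : ∀ x ∈ U, x ∉ S := fun x hx hxS =>
      Finset.disjoint_left.1 hUS hx (mem_union_left _ (mem_erase.2 ⟨(mem_erase.1 (hU hx)).1, hxS⟩))
    refine hT U (hU.trans (erase_subset v T)) (Finset.disjoint_left.2 hUS') fun x hx y hy hxy => ?_
    obtain rfl | hyv := eq_or_ne y v
    · refine absurd (mem_union_right _ ?_) (Finset.disjoint_left.1 hUS hx)
      exact mem_inter.2 ⟨erase_subset y T (hU hx),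
        mem_sdiff.2 ⟨(mem_neighborFinset _ _ _).2 hxy.symm, hUS' x hx⟩⟩
    · exact hUc x hx y (mem_erase.2 ⟨hyv, hy⟩) hxy

lemma exp_mul_pow_mul_card_anchoredSets_succ_le [DecidableEq V] [DecidableRel G.Adj]
    {z : ℕ} (hz : 0 < z) (hdeg : ∀ v, (G.neighborSet v).ncard ≤ z) {v : V} (hv : v ∈ S)
    (hs : s ≠ 0) (ih : ∀ S' : Finset V, S'.Nonempty →
      exp 1 * z ^ #S' * #(G.anchoredSets S' s) ≤ (z * exp 1) ^ s) :
    exp 1 * z ^ #S * #(G.anchoredSets S (s + 1)) ≤ (z * exp 1) ^ (s + 1) := by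
  set N := G.neighborFinset v \ S
  have hterm : ∀ A ∈ N.powerset, exp 1 * z ^ #S * #(G.anchoredSets (S.erase v ∪ A) s) ≤
      z * (z * exp 1) ^ s * ((z : ℝ)⁻¹) ^ #A := by
    intro A hA
    obtain h | h := (S.erase v ∪ A).eq_empty_or_nonempty
    · rw [h, anchoredSets_empty hs, card_empty, Nat.cast_zero, mul_zero]
      positivity
    have hdisj : Disjoint (S.erase v) A :=
      disjoint_of_subset_left (erase_subset v S)
        (disjoint_of_subset_right (mem_powerset.1 hA) disjoint_sdiff)
    have hcard : #(S.erase v ∪ A) + 1 = #S + #A := by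
      rw [card_union_of_disjoint hdisj, ← card_erase_add_one hv]; ring
    have hpow : (z : ℝ) ^ #S = z * z ^ #(S.erase v ∪ A) * ((z : ℝ)⁻¹) ^ #A := by
      rw [inv_pow, eq_mul_inv_iff_mul_eq₀ (by positivity), ← pow_add, ← pow_succ', hcard]
    calc exp 1 * z ^ #S * #(G.anchoredSets (S.erase v ∪ A) s)
        = z * (exp 1 * z ^ #(S.erase v ∪ A) * #(G.anchoredSets (S.erase v ∪ A) s)) *
            ((z : ℝ)⁻¹) ^ #A := by rw [hpow]; ring
      _ ≤ z * (z * exp 1) ^ s * ((z : ℝ)⁻¹) ^ #A := by gcongr; exact ih _ h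
  have hN : #N ≤ z :=
    (card_le_card sdiff_subset).trans ((Set.ncard_eq_toFinset_card' _).symm.trans_le (hdeg v))
  calc exp 1 * z ^ #S * #(G.anchoredSets S (s + 1))
      ≤ exp 1 * z ^ #S * ∑ A ∈ N.powerset, #(G.anchoredSets (S.erase v ∪ A) s) := by
        gcongr
        exact_mod_cast (card_le_card (anchoredSets_succ_subset hv)).trans
          (card_biUnion_le.trans (sum_le_sum fun A _ => card_image_le))
    _ = ∑ A ∈ N.powerset, exp 1 * z ^ #S * #(G.anchoredSets (S.erase v ∪ A) s) := by
        rw [Nat.cast_sum, mul_sum]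
    _ ≤ ∑ A ∈ N.powerset, z * (z * exp 1) ^ s * ((z : ℝ)⁻¹) ^ #A := sum_le_sum hterm
    _ = z * (z * exp 1) ^ s * ∑ A ∈ N.powerset, ((z : ℝ)⁻¹) ^ #A := (mul_sum ..).symm
    _ ≤ z * (z * exp 1) ^ s * exp 1 := by
        gcongr; exact sum_inv_pow_card_powerset_le_exp_one N hN
    _ = (z * exp 1) ^ (s + 1) := by ring

theorem exp_mul_pow_mul_card_anchoredSets_le {z : ℕ} (hz : 0 < z)
    (hdeg : ∀ v, (G.neighborSet v).ncard ≤ z) (s : ℕ) (hS : S.Nonempty) :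
    exp 1 * z ^ #S * #(G.anchoredSets S s) ≤ (z * exp 1) ^ s := by
  classical
  induction s generalizing S with
  | zero => simp [anchoredSets_zero hS]
  | succ s ih =>
    obtain hs | hs := le_or_gt (s + 1) #S
    · exact exp_mul_pow_mul_card_anchoredSets_le_of_le z hS hs
    · obtain ⟨v, hv⟩ := hS
      have hs0 : s ≠ 0 := by have := card_pos.2 ⟨v, hv⟩; omega
      exact exp_mul_pow_mul_card_anchoredSets_succ_le hz hdeg hv hs0 fun S' hS' => ih hS'

theorem card_anchoredSets_le {z : ℕ} (hz : 0 < z) (hdeg : ∀ v, (G.neighborSet v).ncard ≤ z)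
    (hS : S.Nonempty) (hs : #S ≤ s) :
    (#(G.anchoredSets S s) : ℝ) ≤ exp 1 ^ (#S - 1) * (z * exp 1) ^ (s - #S) := by
  have hbound := exp_mul_pow_mul_card_anchoredSets_le hz hdeg s hS
  have hsplit : (z * exp 1) ^ s =
      exp 1 * z ^ #S * (exp 1 ^ (#S - 1) * (z * exp 1) ^ (s - #S)) := by
    rw [← Nat.sub_add_cancel hs, pow_add, Nat.add_sub_cancel, mul_pow,
      ← Nat.sub_add_cancel hS.card_pos, pow_succ, Nat.add_sub_cancel]
    ring
  rw [hsplit] at hbound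
  exact le_of_mul_le_mul_left hbound (by positivity)

end SimpleGraph

theorem stmt_0_general {V : Type*} [Fintype V]
    (G : SimpleGraph V) (z : ℕ) (hz : 1 ≤ z)
    (hdeg : ∀ v : V, (G.neighborSet v).ncard ≤ z)
    (S : Finset V) (hS : S.Nonempty) (s : ℕ) (hs : S.card ≤ s) :
    (({T : Finset V | T.card = s ∧ S ⊆ T ∧
        ∀ v, ∀ hv : v ∈ T, ∃ u, ∃ hu : u ∈ T, u ∈ S ∧
          (G.induce (T : Set V)).Reachable
            ⟨v, Finset.mem_coe.mpr hv⟩ ⟨u, Finset.mem_coe.mpr hu⟩} : Set (Finset V)).ncard : ℝ)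
      ≤ Real.exp 1 ^ (S.card - 1) * ((z : ℝ) * Real.exp 1) ^ (s - S.card) := by
  calc _ ≤ (#(G.anchoredSets S s) : ℝ) := by
        rw [← Set.ncard_coe_finset, Nat.cast_le]
        exact Set.ncard_le_ncard fun T ⟨hTs, hST, hreach⟩ =>
          G.mem_anchoredSets_of_reachable hTs hST hreach
    _ ≤ _ := G.card_anchoredSets_le hz hdeg hS hs

/-- **Cluster counting (Lemma 2 of Gottesman'13).**
Let `G` be a finite simple graph with maximum vertex degree at most `z` (`z ≥ 1`), and
`S` a nonempty subset of its vertices.  For `s ≥ |S|`, the number of vertex subsets `T`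
with `|T| = s`, `S ⊆ T`, such that every connected component of the induced subgraph
`G[T]` contains a vertex of `S`, is at most `e^{|S|-1} (z e)^{s-|S|}`. -/
theorem stmt_0 {V : Type*} [Fintype V] [DecidableEq V]
    (G : SimpleGraph V) (z : ℕ) (hz : 1 ≤ z)
    (hdeg : ∀ v : V, (G.neighborSet v).ncard ≤ z)
    (S : Finset V) (hS : S.Nonempty) (s : ℕ) (hs : S.card ≤ s) :
    (({T : Finset V | T.card = s ∧ S ⊆ T ∧
        ∀ v, ∀ hv : v ∈ T, ∃ u, ∃ hu : u ∈ T, u ∈ S ∧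
          (G.induce (T : Set V)).Reachable
            ⟨v, Finset.mem_coe.mpr hv⟩ ⟨u, Finset.mem_coe.mpr hu⟩} : Set (Finset V)).ncard : ℝ)
      ≤ Real.exp 1 ^ (S.card - 1) * ((z : ℝ) * Real.exp 1) ^ (s - S.card) :=
  stmt_0_general G z hz hdeg S hS s hs
end

section
/- Let G be a finite simple graph with maximum vertex degree at most z (z ≥ 1 an integer) and let S be a nonempty subset of its vertices. For an integer s ≥ 1, let M'_z(s, S) denote the number of vertex subsets T with |T| = s (not necessarily containing S) such that every connected component of the induced subgraph G[T] contains at least one vertex of S. Then M'_z(s, S) ≤ ((z·e)^s / e) · ((1 + 1/z)^{|S|} − 1), where e is Euler's number. -/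
/-!
Label the neighbours of each vertex injectively by `Fin z`. A cluster `T` of size `s` is explored
from its roots `R = S ∩ T` by a graph search that processes one frontier vertex `u` per step and
records the labels of the not yet discovered neighbours of `u` in `T`. Since every component of
`G[T]` meets `R`, the search discovers all of `T` in exactly `s` steps, recording `s - |R|` labels
in total; conversely `R` and the recorded list of label sets determine `T`. Encoding the list as an
`(s - |R|)`-subset of `Fin s × Fin z` bounds the number of clusters by `∑ C(sz, s - |R|)` over
nonempty `R ⊆ S`. Finally `C(sz, j) ≤ e^(s-1) z^j` for `j < s`, because `s^j / j!` increases up to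
`j = s - 1` and `s^(s-1) ≤ e^(s-1) (s-1)!`, and `∑ z^(s - |R|) = z^s ((1 + 1/z)^|S| - 1)`.
-/

open Finset Nat Real

lemma add_one_pow_le_exp_mul_pow (n : ℕ) : ((n : ℝ) + 1) ^ n ≤ exp 1 * n ^ n := by
  rcases Nat.eq_zero_or_pos n with rfl | hn
  · simp [one_le_exp zero_le_one]
  have hn' : (n : ℝ) ≠ 0 := by positivity
  calc ((n : ℝ) + 1) ^ n = n ^ n * (1 + (n : ℝ)⁻¹) ^ n := by
        rw [← mul_pow, mul_add, mul_inv_cancel₀ hn', mul_one]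
    _ ≤ n ^ n * exp 1 := by gcongr; exact one_add_inv_pow_le_exp
    _ = exp 1 * n ^ n := mul_comm _ _

lemma add_one_pow_le_exp_pow_mul_factorial (n : ℕ) :
    ((n : ℝ) + 1) ^ n ≤ exp 1 ^ n * n ! := by
  induction n with
  | zero => simp
  | succ n ih =>
    calc ((n + 1 : ℕ) + 1 : ℝ) ^ (n + 1) ≤ exp 1 * ((n + 1 : ℕ) : ℝ) ^ (n + 1) :=
          add_one_pow_le_exp_mul_pow (n + 1)
      _ = exp 1 * ((n : ℝ) + 1) * ((n : ℝ) + 1) ^ n := by push_cast; ring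
      _ ≤ exp 1 * ((n : ℝ) + 1) * (exp 1 ^ n * n !) := by gcongr
      _ = exp 1 ^ (n + 1) * (n + 1)! := by push_cast [Nat.factorial_succ]; ring

lemma Nat.pow_mul_factorial_le {n j : ℕ} (hj : j ≤ n) :
    (n + 1) ^ j * n ! ≤ (n + 1) ^ n * j ! := by
  have hfac : n ! = j ! * n.descFactorial (n - j) := by
    rw [← Nat.factorial_mul_descFactorial (Nat.sub_le n j), Nat.sub_sub_self hj]
  calc (n + 1) ^ j * n ! ≤ (n + 1) ^ j * (j ! * (n + 1) ^ (n - j)) := by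
        rw [hfac]
        gcongr
        exact (Nat.descFactorial_le_pow n _).trans (Nat.pow_le_pow_left n.le_succ _)
    _ = (n + 1) ^ n * j ! := by
        rw [mul_left_comm, ← pow_add, Nat.add_sub_cancel' hj, mul_comm]

lemma add_one_pow_le_exp_pow_mul_factorial_of_le {n j : ℕ} (hj : j ≤ n) :
    ((n : ℝ) + 1) ^ j ≤ exp 1 ^ n * j ! := by
  have hmul : ((n : ℝ) + 1) ^ j * n ! ≤ (exp 1 ^ n * j !) * n ! :=
    calc ((n : ℝ) + 1) ^ j * n ! ≤ ((n : ℝ) + 1) ^ n * j ! := by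
          exact_mod_cast Nat.pow_mul_factorial_le hj
      _ ≤ exp 1 ^ n * n ! * j ! := by gcongr; exact add_one_pow_le_exp_pow_mul_factorial n
      _ = (exp 1 ^ n * j !) * n ! := by ring
  exact le_of_mul_le_mul_right hmul (by positivity)

lemma choose_le_exp_pow_mul_pow {n j : ℕ} (z : ℕ) (hj : j ≤ n) :
    (((n + 1) * z).choose j : ℝ) ≤ exp 1 ^ n * z ^ j :=
  calc (((n + 1) * z).choose j : ℝ) ≤ (((n + 1) * z : ℕ) : ℝ) ^ j / j ! :=
        Nat.choose_le_pow_div j _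
    _ = ((n : ℝ) + 1) ^ j / j ! * z ^ j := by push_cast; rw [mul_pow]; ring
    _ ≤ exp 1 ^ n * z ^ j := by
        gcongr
        rw [div_le_iff₀ (by positivity)]
        exact add_one_pow_le_exp_pow_mul_factorial_of_le hj

lemma Finset.sum_powerset_erase_empty_pow {ι R : Type*} [DecidableEq ι] [CommRing R]
    (S : Finset ι) (x : R) :
    ∑ t ∈ S.powerset.erase ∅, x ^ t.card = (x + 1) ^ S.card - 1 := by
  rw [Finset.sum_erase_eq_sub (Finset.empty_mem_powerset S), ← sum_pow_mul_eq_add_pow]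
  simp

lemma sum_choose_sub_card_le {ι : Type*} [DecidableEq ι] (S : Finset ι) (n z : ℕ) (hz : 0 < z) :
    ∑ R ∈ S.powerset.filter (fun R => R.Nonempty ∧ R.card ≤ n + 1),
        ((((n + 1) * z).choose (n + 1 - R.card) : ℕ) : ℝ)
      ≤ exp 1 ^ n * z ^ (n + 1) * ((1 + 1 / (z : ℝ)) ^ S.card - 1) := by
  have hz' : (z : ℝ) ≠ 0 := by positivity
  calc ∑ R ∈ S.powerset.filter (fun R => R.Nonempty ∧ R.card ≤ n + 1),
        ((((n + 1) * z).choose (n + 1 - R.card) : ℕ) : ℝ)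
      ≤ ∑ R ∈ S.powerset.filter (fun R => R.Nonempty ∧ R.card ≤ n + 1),
          exp 1 ^ n * z ^ (n + 1) * (1 / (z : ℝ)) ^ R.card := by
        refine Finset.sum_le_sum fun R hR => ?_
        obtain ⟨hR, hRne, hRs⟩ := Finset.mem_filter.mp hR
        rw [one_div, inv_pow, mul_assoc, ← pow_sub₀ _ hz' hRs]
        exact choose_le_exp_pow_mul_pow z (by have := hRne.card_pos; omega)
    _ ≤ ∑ R ∈ S.powerset.erase ∅, exp 1 ^ n * z ^ (n + 1) * (1 / (z : ℝ)) ^ R.card := by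
        refine Finset.sum_le_sum_of_subset_of_nonneg (fun R hR => ?_) fun _ _ _ => by positivity
        obtain ⟨hR, hRne, -⟩ := Finset.mem_filter.mp hR
        exact Finset.mem_erase.mpr ⟨hRne.ne_empty, hR⟩
    _ = exp 1 ^ n * z ^ (n + 1) * ((1 + 1 / (z : ℝ)) ^ S.card - 1) := by
        rw [← Finset.mul_sum, Finset.sum_powerset_erase_empty_pow, add_comm (1 / (z : ℝ))]

def List.finsetSigma {α : Type*} (s : ℕ) (L : List (Finset α)) : Finset (Σ _ : Fin s, α) :=
  univ.sigma fun i => L.getD i ∅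

lemma List.card_finsetSigma {α : Type*} {s : ℕ} {L : List (Finset α)} (hL : L.length = s) :
    (L.finsetSigma s).card = (L.map Finset.card).sum := by
  subst hL
  simp [List.finsetSigma, Finset.card_sigma]

lemma List.finsetSigma_injOn {α : Type*} (s : ℕ) :
    Set.InjOn (List.finsetSigma (α := α) s) {L | L.length = s} := by
  intro L₁ h₁ L₂ h₂ h
  refine List.ext_getElem (h₁.trans h₂.symm) fun i hi₁ hi₂ => ?_
  ext a
  have := congrArg (⟨⟨i, h₁ ▸ hi₁⟩, a⟩ ∈ ·) h
  simpa [List.finsetSigma, hi₁, hi₂] using this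

namespace SimpleGraph

lemma Reachable.mem_of_adj_closed {W : Type*} {H : SimpleGraph W} {s : Set W}
    (hs : ∀ a b, H.Adj a b → a ∈ s → b ∈ s) {a b : W} (h : H.Reachable a b) (ha : a ∈ s) :
    b ∈ s := by
  obtain ⟨p⟩ := h
  induction p with
  | nil => exact ha
  | cons hadj _ ih => exact ih (hs _ _ hadj ha)

variable {V : Type*} (G : SimpleGraph V)

def ComponentsMeet (T R : Finset V) : Prop :=
  ∀ v, ∀ hv : v ∈ T, ∃ u, ∃ hu : u ∈ T, u ∈ R ∧
    (G.induce (T : Set V)).Reachable ⟨v, Finset.mem_coe.mpr hv⟩ ⟨u, Finset.mem_coe.mpr hu⟩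

variable {G}

lemma ComponentsMeet.mono {T R D : Finset V} (h : G.ComponentsMeet T R)
    (hRD : ∀ u ∈ T, u ∈ R → u ∈ D) : G.ComponentsMeet T D := by
  intro v hv
  obtain ⟨u, hu, huR, hreach⟩ := h v hv
  exact ⟨u, hu, hRD u hu huR, hreach⟩

lemma ComponentsMeet.inter_nonempty [DecidableEq V] {T R : Finset V} (h : G.ComponentsMeet T R)
    (hT : T.Nonempty) : (R ∩ T).Nonempty := by
  obtain ⟨v, hv⟩ := hT
  obtain ⟨u, hu, huR, -⟩ := h v hv
  exact ⟨u, Finset.mem_inter.mpr ⟨huR, hu⟩⟩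

lemma ComponentsMeet.subset_of_closed {T D : Finset V} (h : G.ComponentsMeet T D)
    (hclosed : ∀ u ∈ D, ∀ w ∈ T, G.Adj u w → w ∈ D) : T ⊆ D := by
  intro v hv
  obtain ⟨u, hu, huD, hreach⟩ := h v hv
  exact hreach.symm.mem_of_adj_closed (s := {x : (T : Set V) | (x : V) ∈ D})
    (fun a b hab ha => hclosed _ ha _ b.2 hab) huD

section Labelling

variable [Fintype V] {z : ℕ}

lemma exists_injOn_neighborSet (hz : 0 < z) (hdeg : ∀ v, (G.neighborSet v).ncard ≤ z) :
    ∃ lbl : V → V → Fin z, ∀ u, Set.InjOn (lbl u) (G.neighborSet u) := by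
  classical
  have hemb (u : V) : Nonempty (G.neighborSet u ↪ Fin z) :=
    Function.Embedding.nonempty_of_card_le <| by
      simpa [Set.ncard_eq_toFinset_card'] using hdeg u
  refine ⟨fun u w => if h : G.Adj u w then (hemb u).some ⟨w, h⟩ else ⟨0, hz⟩,
    fun u a ha b hb hab => ?_⟩
  simp only [show G.Adj u a from ha, show G.Adj u b from hb, dite_true] at hab
  exact congrArg Subtype.val ((hemb u).some.injective hab)

variable [DecidableRel G.Adj]

def labelledNeighbors (lbl : V → V → Fin z) (u : V) (A : Finset (Fin z)) : Finset V :=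
  (G.neighborFinset u).filter (lbl u · ∈ A)

lemma labelledNeighbors_image {lbl : V → V → Fin z} {u : V}
    (hlbl : Set.InjOn (lbl u) (G.neighborSet u)) {C : Finset V} (hC : ∀ w ∈ C, G.Adj u w) :
    G.labelledNeighbors lbl u (C.image (lbl u)) = C := by
  ext w
  simp only [labelledNeighbors, Finset.mem_filter, mem_neighborFinset, Finset.mem_image]
  constructor
  · rintro ⟨hw, c, hc, hcw⟩
    rwa [← hlbl (hC c hc) hw hcw]
  · exact fun hw => ⟨hC w hw, w, hw, rfl⟩

end Labelling

section Exploration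

variable [DecidableEq V] [DecidableRel G.Adj]

variable (G) in
structure IsExploration (T D F : Finset V) : Prop where
  frontier_subset : F ⊆ D
  subset : D ⊆ T
  closed : ∀ u ∈ D \ F, ∀ w ∈ T, G.Adj u w → w ∈ D
  componentsMeet : G.ComponentsMeet T D

namespace IsExploration

variable {T D F : Finset V} {u : V}

lemma step (h : G.IsExploration T D F) (hu : u ∈ F) :
    G.IsExploration T (D ∪ (T \ D).filter (G.Adj u)) (F.erase u ∪ (T \ D).filter (G.Adj u)) where
  frontier_subset :=
    Finset.union_subset_union ((F.erase_subset u).trans h.frontier_subset) le_rfl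
  subset := Finset.union_subset h.subset ((Finset.filter_subset _ _).trans Finset.sdiff_subset)
  closed := by
    intro v hv w hwT hvw
    simp only [Finset.mem_sdiff, Finset.mem_union, Finset.mem_erase, Finset.mem_filter, not_or,
      not_and_or, not_not] at hv ⊢
    obtain ⟨hvD | hvC, hvF, hvC'⟩ := hv
    · rcases hvF with rfl | hvF
      · tauto
      · exact Or.inl (h.closed v (Finset.mem_sdiff.mpr ⟨hvD, hvF⟩) w hwT hvw)
    · tauto
  componentsMeet := h.componentsMeet.mono fun v _ hv => Finset.mem_union_left _ hv

end IsExploration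

variable [Fintype V] {z : ℕ}

/-- The search driven by a list of label sets: `D` is the set of discovered vertices and `F ⊆ D`
the frontier; each step processes `u ∈ F` (chosen as a function of `F` alone) and discovers the
neighbours of `u` whose labels form the next entry of the list. -/
noncomputable def explore (lbl : V → V → Fin z) :
    List (Finset (Fin z)) → Finset V → Finset V → Finset V
  | [], D, _ => D
  | A :: L, D, F =>
    if hF : F.Nonempty then
      explore lbl L (D ∪ G.labelledNeighbors lbl hF.choose A)
        (F.erase hF.choose ∪ G.labelledNeighbors lbl hF.choose A)
    else D

theorem exists_explore_eq {lbl : V → V → Fin z}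
    (hlbl : ∀ u, Set.InjOn (lbl u) (G.neighborSet u)) {T D F : Finset V}
    (h : G.IsExploration T D F) :
    ∃ L : List (Finset (Fin z)), L.length = F.card + (T \ D).card ∧
      (L.map Finset.card).sum = (T \ D).card ∧ G.explore lbl L D F = T := by
  obtain ⟨n, hn⟩ : ∃ n, F.card + (T \ D).card = n := ⟨_, rfl⟩
  rw [hn]
  induction n generalizing D F with
  | zero =>
    have hTD : T ⊆ D := Finset.sdiff_eq_empty_iff_subset.mp (Finset.card_eq_zero.mp (by omega))
    exact ⟨[], rfl, by simp [Finset.sdiff_eq_empty_iff_subset.mpr hTD], h.subset.antisymm hTD⟩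
  | succ n ih =>
    have hF : F.Nonempty := by
      rw [Finset.nonempty_iff_ne_empty]
      rintro rfl
      have hTD : T ⊆ D := h.componentsMeet.subset_of_closed (by simpa using h.closed)
      simp [Finset.sdiff_eq_empty_iff_subset.mpr hTD] at hn
    set u := hF.choose
    have hu : u ∈ F := hF.choose_spec
    set C := (T \ D).filter (G.Adj u)
    have hCadj : ∀ w ∈ C, G.Adj u w := fun w hw => (Finset.mem_filter.mp hw).2
    have hCT : C ⊆ T \ D := Finset.filter_subset _ _
    have hrest : (T \ (D ∪ C)).card + C.card = (T \ D).card := by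
      rw [Finset.sdiff_union_distrib, ← Finset.sdiff_sdiff_left']
      exact Finset.card_sdiff_add_card_eq_card hCT
    have hfront : (F.erase u ∪ C).card + 1 = F.card + C.card := by
      have hCD : Disjoint C D := Finset.disjoint_of_subset_left hCT Finset.sdiff_disjoint
      rw [Finset.card_union_of_disjoint (hCD.mono_right ((F.erase_subset u).trans
        h.frontier_subset)).symm, add_right_comm, Finset.card_erase_add_one hu]
    obtain ⟨L, hlen, hsum, hexp⟩ := ih (D := D ∪ C) (F := F.erase u ∪ C) (h.step hu) (by omega)
    refine ⟨C.image (lbl u) :: L, by simp [hlen], ?_, ?_⟩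
    · rw [List.map_cons, List.sum_cons, hsum, Finset.card_image_of_injOn ((hlbl u).mono hCadj)]
      omega
    · rwa [explore, dif_pos hF, labelledNeighbors_image (hlbl u) hCadj]

theorem exists_explore_inter_eq {lbl : V → V → Fin z}
    (hlbl : ∀ u, Set.InjOn (lbl u) (G.neighborSet u)) {S T : Finset V}
    (hmeet : G.ComponentsMeet T S) :
    ∃ L : List (Finset (Fin z)), L.length = T.card ∧
      (L.map Finset.card).sum = T.card - (S ∩ T).card ∧ G.explore lbl L (S ∩ T) (S ∩ T) = T := by
  have hroots := Finset.card_sdiff_add_card_eq_card (Finset.inter_subset_right (s₁ := S) (s₂ := T))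
  obtain ⟨L, hlen, hsum, hexp⟩ := exists_explore_eq hlbl (T := T) (D := S ∩ T) (F := S ∩ T)
    { frontier_subset := le_rfl
      subset := Finset.inter_subset_right
      closed := by simp
      componentsMeet := hmeet.mono fun u hu huS => Finset.mem_inter.mpr ⟨huS, hu⟩ }
  exact ⟨L, by omega, by omega, hexp⟩

end Exploration

theorem ncard_componentsMeet_le [Fintype V] [DecidableEq V] {z : ℕ} (hz : 0 < z)
    (hdeg : ∀ v, (G.neighborSet v).ncard ≤ z) (S : Finset V) {s : ℕ} (hs : 0 < s) :
    ({T : Finset V | T.card = s ∧ G.ComponentsMeet T S} : Set (Finset V)).ncard ≤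
      ∑ R ∈ S.powerset.filter (fun R => R.Nonempty ∧ R.card ≤ s), (s * z).choose (s - R.card) := by
  classical
  obtain ⟨lbl, hlbl⟩ := G.exists_injOn_neighborSet hz hdeg
  have hcode : ∀ T ∈ {T : Finset V | T.card = s ∧ G.ComponentsMeet T S},
      ∃ L : List (Finset (Fin z)), L.length = T.card ∧
        (L.map Finset.card).sum = T.card - (S ∩ T).card ∧ G.explore lbl L (S ∩ T) (S ∩ T) = T :=
    fun T hT => exists_explore_inter_eq hlbl hT.2
  choose! code hcode using hcode
  refine (Set.ncard_le_ncard_of_injOn (fun T => (⟨S ∩ T, (code T).finsetSigma s⟩ :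
      Σ _ : Finset V, Finset (Σ _ : Fin s, Fin z)))
    (t := ↑((S.powerset.filter fun R => R.Nonempty ∧ R.card ≤ s).sigma
      fun R => (univ : Finset (Σ _ : Fin s, Fin z)).powersetCard (s - R.card))) ?_ ?_).trans ?_
  · rintro T hT
    obtain ⟨hlen, hsum, -⟩ := hcode T hT
    obtain ⟨hcard, hmeet⟩ := hT
    subst hcard
    simp only [Finset.coe_sigma, Set.mem_sigma_iff, Finset.mem_coe, Finset.mem_filter,
      Finset.mem_powerset, Finset.mem_powersetCard]
    exact ⟨⟨Finset.inter_subset_left, hmeet.inter_nonempty (Finset.card_pos.mp hs),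
      Finset.card_le_card Finset.inter_subset_right⟩,
      Finset.subset_univ _, by rw [List.card_finsetSigma hlen, hsum]⟩
  · intro T₁ hT₁ T₂ hT₂ h
    obtain ⟨hroots, hcodes⟩ := Sigma.mk.inj_iff.mp h
    have hcodes := List.finsetSigma_injOn s ((hcode T₁ hT₁).1.trans hT₁.1)
      ((hcode T₂ hT₂).1.trans hT₂.1) (eq_of_heq hcodes)
    rw [← (hcode T₁ hT₁).2.2, ← (hcode T₂ hT₂).2.2, hroots, hcodes]
  · rw [Set.ncard_coe_finset, Finset.card_sigma]
    simp

end SimpleGraph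

theorem stmt_1_general {V : Type*} [Fintype V] [DecidableEq V]
    (G : SimpleGraph V) (z : ℕ) (hz : 1 ≤ z)
    (hdeg : ∀ v : V, (G.neighborSet v).ncard ≤ z)
    (S : Finset V) (s : ℕ) (hs : 1 ≤ s) :
    (({T : Finset V | T.card = s ∧
        ∀ v, ∀ hv : v ∈ T, ∃ u, ∃ hu : u ∈ T, u ∈ S ∧
          (G.induce (T : Set V)).Reachable
            ⟨v, Finset.mem_coe.mpr hv⟩ ⟨u, Finset.mem_coe.mpr hu⟩} : Set (Finset V)).ncard : ℝ)
      ≤ ((z : ℝ) * Real.exp 1) ^ s / Real.exp 1 * ((1 + 1 / (z : ℝ)) ^ S.card - 1) := by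
  obtain ⟨n, rfl⟩ : ∃ n, s = n + 1 := ⟨s - 1, by omega⟩
  calc _ ≤ ∑ R ∈ S.powerset.filter (fun R => R.Nonempty ∧ R.card ≤ n + 1),
        ((((n + 1) * z).choose (n + 1 - R.card) : ℕ) : ℝ) := by
        exact_mod_cast G.ncard_componentsMeet_le hz hdeg S n.succ_pos
    _ ≤ exp 1 ^ n * z ^ (n + 1) * ((1 + 1 / (z : ℝ)) ^ S.card - 1) :=
        sum_choose_sub_card_le S n z hz
    _ = _ := by field_simp; ring

/-- **Cluster counting, touching version.**
Let `G` be a finite simple graph with maximum degree at most `z` (`z ≥ 1`) and `S` a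
nonempty subset of its vertices.  For an integer `s ≥ 1`, the number of vertex subsets
`T` with `|T| = s` (not necessarily containing `S`) such that every connected component
of the induced subgraph `G[T]` contains at least one vertex of `S` is at most
`((z e)^s / e) ((1 + 1/z)^{|S|} - 1)`. -/
theorem stmt_1 {V : Type*} [Fintype V] [DecidableEq V]
    (G : SimpleGraph V) (z : ℕ) (hz : 1 ≤ z)
    (hdeg : ∀ v : V, (G.neighborSet v).ncard ≤ z)
    (S : Finset V) (hS : S.Nonempty) (s : ℕ) (hs : 1 ≤ s) :
    (({T : Finset V | T.card = s ∧
        ∀ v, ∀ hv : v ∈ T, ∃ u, ∃ hu : u ∈ T, u ∈ S ∧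
          (G.induce (T : Set V)).Reachable
            ⟨v, Finset.mem_coe.mpr hv⟩ ⟨u, Finset.mem_coe.mpr hu⟩} : Set (Finset V)).ncard : ℝ)
      ≤ ((z : ℝ) * Real.exp 1) ^ s / Real.exp 1 * ((1 + 1 / (z : ℝ)) ^ S.card - 1) :=
  stmt_1_general G z hz hdeg S s hs
end

section
/- Let H ∈ F_2^{σ×n} be a matrix in which every row has Hamming weight at most r and every column has Hamming weight at most c (r, c ≥ 1), and set z = (r−1)·c and p_z = 1/((1+z)·z·e^2). There exists a constant C depending only on z such that: for every probability distribution Pr on F_2^n that is locally stochastic with rate p, where 0 < p < 1/(z·e), and for every e ∈ F_2^n, the probability of its equivalence class Pr([e]_H) := Σ_{e' : H e' = H e} Pr(e') satisfies Pr([e]_H) ≤ C · (p/p_z)^{|e|^r_H}. -/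
/-!
Fix a minimum-weight representative `e₀` of the class. For `e` in the class, `f = e - e₀` lies in
the kernel of `H`; keep only those connected components of `supp f` (in the graph joining two
columns that share a row of `H`) which meet `supp e₀`. Each row of `H` sees either only kept or
only discarded columns of `supp f`, so `a = e₀ + (kept part of f)` is still in the class, and
`supp a ⊆ supp e`. Local stochasticity therefore bounds the mass of the fibre over `a` by `p^|a|`.
Over `F₂` the vector `a` is determined by `supp (a - e₀)`, a set all of whose components meet
`supp e₀`; such "anchored" sets are counted by a cluster expansion: the column graph has degree
at most `z`, and `u = 1/(z e)`, `γ = 1/z` satisfy `u (1 + γ)^z ≤ γ` because `(1 + 1/z)^z ≤ e`,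
so the anchored sets weighted by `u^|S|` sum to at most `(1 + 1/z)^{w₀}`.
-/

open Finset
open scoped Matrix

theorem Finset.sum_le_sum_of_injOn_of_nonneg {α β M : Type*} [AddCommMonoid M] [PartialOrder M]
    [IsOrderedAddMonoid M] [DecidableEq β] {s : Finset α} {t : Finset β} (e : α → β)
    (he : Set.InjOn e s) (hst : ∀ a ∈ s, e a ∈ t) (g : β → M) (hg : ∀ b ∈ t, 0 ≤ g b) :
    ∑ a ∈ s, g (e a) ≤ ∑ b ∈ t, g b := by
  rw [← sum_image he]
  exact sum_le_sum_of_subset_of_nonneg (image_subset_iff.2 hst) fun b hb _ => hg b hb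

namespace SimpleGraph

variable {V : Type*} (G : SimpleGraph V)

def ReachIn (S : Finset V) : V → V → Prop :=
  Relation.ReflTransGen fun a b => a ∈ S ∧ b ∈ S ∧ G.Adj a b

def IsAnchored (W S : Finset V) : Prop :=
  ∀ a ∈ S, ∃ x ∈ W, G.ReachIn S a x

def IsCluster (x : V) (S : Finset V) : Prop :=
  x ∈ S ∧ ∀ a ∈ S, G.ReachIn S x a

open scoped Classical in
noncomputable def anchoredSum (u : ℝ) (U W : Finset V) : ℝ :=
  ∑ S ∈ U.powerset with G.IsAnchored W S, u ^ #S

open scoped Classical in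
noncomputable def clusterSum (u : ℝ) (U : Finset V) (x : V) : ℝ :=
  ∑ S ∈ U.powerset with G.IsCluster x S, u ^ #S

variable {G} {S U W : Finset V} {a b x : V} {u γ : ℝ}

namespace ReachIn

theorem symm (h : G.ReachIn S a b) : G.ReachIn S b a := by
  induction h with
  | refl => exact .refl
  | tail _ hstep ih => exact .head ⟨hstep.2.1, hstep.1, hstep.2.2.symm⟩ ih

theorem trans {c : V} (h : G.ReachIn S a b) (h' : G.ReachIn S b c) : G.ReachIn S a c :=
  Relation.ReflTransGen.trans h h'

theorem mem_right (ha : a ∈ S) (h : G.ReachIn S a b) : b ∈ S := by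
  induction h with
  | refl => exact ha
  | tail _ hstep _ => exact hstep.2.1

theorem filter {P : V → Prop} [DecidablePred P] (h : G.ReachIn S a b)
    (hP : ∀ v, G.ReachIn S v b → P v) : G.ReachIn (S.filter P) a b := by
  induction h using Relation.ReflTransGen.head_induction_on with
  | refl => exact .refl
  | head hstep h ih =>
    exact .head ⟨mem_filter.2 ⟨hstep.1, hP _ (.head hstep h)⟩, mem_filter.2 ⟨hstep.2.1, hP _ h⟩,
      hstep.2.2⟩ ih

theorem exists_adj_of_erase [DecidableEq V] (h : G.ReachIn S a x) (hax : a ≠ x) :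
    ∃ y ∈ S.erase x, G.Adj x y ∧ G.ReachIn (S.erase x) a y := by
  induction h using Relation.ReflTransGen.head_induction_on with
  | refl => exact absurd rfl hax
  | head hstep h ih =>
    rename_i a' c
    have ha' : a' ∈ S.erase x := mem_erase.2 ⟨hax, hstep.1⟩
    by_cases hc : c = x
    · exact ⟨a', ha', hc ▸ hstep.2.2.symm, .refl⟩
    · obtain ⟨y, hy, hxy, hreach⟩ := ih hc
      exact ⟨y, hy, hxy, .head ⟨ha', mem_erase.2 ⟨hc, hstep.2.1⟩, hstep.2.2⟩ hreach⟩

end ReachIn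

theorem clusterSum_nonneg (hu : 0 ≤ u) : 0 ≤ G.clusterSum u U x :=
  sum_nonneg fun _ _ => pow_nonneg hu _

theorem isAnchored_empty_iff : G.IsAnchored ∅ S ↔ S = ∅ := by
  simp [IsAnchored, eq_empty_iff_forall_notMem]

theorem anchoredSum_empty : G.anchoredSum u U ∅ = 1 := by
  classical
  rw [anchoredSum, filter_congr fun S _ => isAnchored_empty_iff, filter_eq' _ ∅,
    if_pos (empty_mem_powerset U), sum_singleton, card_empty, pow_zero]

theorem anchoredSum_insert_le [DecidableEq V] (hu : 0 ≤ u) (hx : x ∉ W) :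
    G.anchoredSum u U (insert x W) ≤ (1 + G.clusterSum u U x) * G.anchoredSum u U W := by
  classical
  -- `S` splits into the component of `x` inside `S` and the rest, which stays anchored at `W`.
  set split : Finset V → Finset V × Finset V := fun S =>
    ({v ∈ S | G.ReachIn S v x}, {v ∈ S | ¬ G.ReachIn S v x})
  have hunion : ∀ S, (split S).1 ∪ (split S).2 = S := fun S => filter_union_filter_not_eq _ S
  have hcluster : ∀ S, (split S).1 = ∅ ∨ G.IsCluster x (split S).1 := by
    refine fun S => (eq_empty_or_nonempty _).imp_right fun ⟨v, hv⟩ => ?_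
    obtain ⟨hvS, hvx⟩ := mem_filter.1 hv
    refine ⟨mem_filter.2 ⟨hvx.mem_right hvS, .refl⟩, fun a ha => ?_⟩
    exact (ReachIn.filter (mem_filter.1 ha).2 fun _ h => h).symm
  have hanchored : ∀ S, G.IsAnchored (insert x W) S → G.IsAnchored W (split S).2 := by
    intro S hS a ha
    obtain ⟨haS, hax⟩ := mem_filter.1 ha
    obtain ⟨y, hy, hay⟩ := hS a haS
    have hyx : y ≠ x := by rintro rfl; exact hax hay
    refine ⟨y, (mem_insert.1 hy).resolve_left hyx, hay.filter fun v hvy hvx => ?_⟩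
    exact hax (hay.trans (hvy.symm.trans hvx))
  set 𝒜 := U.powerset.filter (G.IsAnchored (insert x W))
  set 𝒦 := U.powerset.filter (G.IsCluster x)
  set ℬ := U.powerset.filter (G.IsAnchored W)
  have hmaps : ∀ S ∈ 𝒜, split S ∈ insert ∅ 𝒦 ×ˢ ℬ := by
    intro S hS
    obtain ⟨hSU, hS⟩ := mem_filter.1 hS
    have hsub : ∀ T ⊆ S, T ∈ U.powerset := fun T hT =>
      mem_powerset.2 (hT.trans (mem_powerset.1 hSU))
    refine mem_product.2 ⟨?_, mem_filter.2 ⟨hsub _ (filter_subset _ _), hanchored S hS⟩⟩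
    exact (hcluster S).elim (fun h => mem_insert.2 (.inl h))
      fun h => mem_insert_of_mem (mem_filter.2 ⟨hsub _ (filter_subset _ _), h⟩)
  have hempty : ∅ ∉ 𝒦 := fun h => by simp [𝒦, IsCluster] at h
  calc G.anchoredSum u U (insert x W)
      = ∑ S ∈ 𝒜, (fun P : Finset V × Finset V => u ^ #P.1 * u ^ #P.2) (split S) :=
        sum_congr rfl fun S _ => by simp only [split, ← pow_add, card_filter_add_card_filter_not]
    _ ≤ ∑ P ∈ insert ∅ 𝒦 ×ˢ ℬ, u ^ #P.1 * u ^ #P.2 :=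
        sum_le_sum_of_injOn_of_nonneg split
          (fun S₁ _ S₂ _ h => by rw [← hunion S₁, ← hunion S₂, h]) hmaps
          (fun P => u ^ #P.1 * u ^ #P.2)
          fun _ _ => by positivity
    _ = (1 + G.clusterSum u U x) * G.anchoredSum u U W := by
        simp only [sum_product, ← sum_mul_sum, sum_insert hempty, card_empty, pow_zero, one_mul]
        rw [add_mul, one_mul]
        rfl

theorem anchoredSum_le_prod (hu : 0 ≤ u) (U W : Finset V) :
    G.anchoredSum u U W ≤ ∏ x ∈ W, (1 + G.clusterSum u U x) := by
  classical
  induction W using Finset.induction_on with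
  | empty => rw [anchoredSum_empty, prod_empty]
  | insert x W hx ih =>
    rw [prod_insert hx]
    exact (anchoredSum_insert_le hu hx).trans
      (mul_le_mul_of_nonneg_left ih (add_nonneg zero_le_one (clusterSum_nonneg hu)))

theorem anchoredSum_le_pow_of_clusterSum_le (hu : 0 ≤ u) (h : ∀ y ∈ W, G.clusterSum u U y ≤ γ) :
    G.anchoredSum u U W ≤ (1 + γ) ^ #W :=
  (anchoredSum_le_prod hu U W).trans <| (prod_le_prod
    (fun _ _ => add_nonneg zero_le_one (clusterSum_nonneg hu))
    fun y hy => add_le_add_right (h y hy) 1).trans_eq (prod_const _)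

theorem clusterSum_le_mul_anchoredSum [DecidableEq V] [G.LocallyFinite] (hu : 0 ≤ u) :
    G.clusterSum u U x ≤ u * G.anchoredSum u (U.erase x) (G.neighborFinset x) := by
  classical
  set 𝒦 := U.powerset.filter (G.IsCluster x)
  set ℬ := (U.erase x).powerset.filter (G.IsAnchored (G.neighborFinset x))
  have hmaps : ∀ S ∈ 𝒦, S.erase x ∈ ℬ := by
    intro S hS
    obtain ⟨hSU, hxS, hreach⟩ := mem_filter.1 hS
    refine mem_filter.2 ⟨mem_powerset.2 (erase_subset_erase x (mem_powerset.1 hSU)), fun a ha => ?_⟩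
    obtain ⟨y, hy, hxy, hay⟩ :=
      (hreach a (mem_of_mem_erase ha)).symm.exists_adj_of_erase (ne_of_mem_erase ha)
    exact ⟨y, (G.mem_neighborFinset x y).2 hxy, hay⟩
  have hinj : Set.InjOn (fun S : Finset V => S.erase x) 𝒦 := fun S₁ hS₁ S₂ hS₂ h => by
    rw [← insert_erase (mem_filter.1 hS₁).2.1, ← insert_erase (mem_filter.1 hS₂).2.1]
    exact congrArg (insert x) h
  calc G.clusterSum u U x = ∑ S ∈ 𝒦, u * u ^ #(S.erase x) :=
        sum_congr rfl fun S hS => by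
          rw [← card_erase_add_one (mem_filter.1 hS).2.1, pow_succ, mul_comm]
    _ ≤ ∑ T ∈ ℬ, u * u ^ #T :=
        sum_le_sum_of_injOn_of_nonneg _ hinj hmaps (fun T => u * u ^ #T) fun _ _ => by positivity
    _ = u * G.anchoredSum u (U.erase x) (G.neighborFinset x) := by rw [anchoredSum, mul_sum]

theorem clusterSum_eq_zero_of_notMem (hx : x ∉ U) : G.clusterSum u U x = 0 := by
  classical
  refine sum_eq_zero fun S hS => ?_
  exact absurd (mem_powerset.1 (mem_filter.1 hS).1 (mem_filter.1 hS).2.1) hx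

variable [G.LocallyFinite] {z : ℕ}

theorem clusterSum_le (hdeg : ∀ v, G.degree v ≤ z) (hu : 0 ≤ u) (hγ : 0 ≤ γ)
    (hkey : u * (1 + γ) ^ z ≤ γ) (U : Finset V) (x : V) : G.clusterSum u U x ≤ γ := by
  classical
  induction U using Finset.strongInduction generalizing x with
  | H U ih =>
    by_cases hx : x ∈ U
    · calc G.clusterSum u U x ≤ u * G.anchoredSum u (U.erase x) (G.neighborFinset x) :=
            clusterSum_le_mul_anchoredSum hu
        _ ≤ u * (1 + γ) ^ z := by
            refine mul_le_mul_of_nonneg_left ?_ hu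
            calc G.anchoredSum u (U.erase x) (G.neighborFinset x) ≤ (1 + γ) ^ G.degree x :=
                  anchoredSum_le_pow_of_clusterSum_le hu fun y _ => ih _ (erase_ssubset hx) y
              _ ≤ (1 + γ) ^ z := pow_le_pow_right₀ (by linarith) (hdeg x)
        _ ≤ γ := hkey
    · rw [clusterSum_eq_zero_of_notMem hx]
      exact hγ

theorem anchoredSum_le_pow (hdeg : ∀ v, G.degree v ≤ z) (hu : 0 ≤ u) (hγ : 0 ≤ γ)
    (hkey : u * (1 + γ) ^ z ≤ γ) (U W : Finset V) : G.anchoredSum u U W ≤ (1 + γ) ^ #W :=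
  anchoredSum_le_pow_of_clusterSum_le hu fun y _ => clusterSum_le hdeg hu hγ hkey U y

end SimpleGraph

theorem pow_mul_pow_le_pow_mul_pow {α : Type*} [CommSemiring α] [PartialOrder α] [IsOrderedRing α]
    {p u : α} (hp : 0 ≤ p) (hpu : p ≤ u) (hu : u ≤ 1) {w t s : ℕ} (hwt : w ≤ t)
    (hs : s ≤ t + w) : p ^ t * u ^ (2 * w) ≤ p ^ w * u ^ s := by
  obtain ⟨d, rfl⟩ := Nat.exists_eq_add_of_le hwt
  have hu0 : 0 ≤ u := hp.trans hpu
  calc p ^ (w + d) * u ^ (2 * w) = p ^ w * (p ^ d * u ^ (2 * w)) := by ring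
    _ ≤ p ^ w * (u ^ d * u ^ (2 * w)) := by gcongr
    _ = p ^ w * u ^ (d + 2 * w) := by ring
    _ ≤ p ^ w * u ^ s :=
        mul_le_mul_of_nonneg_left (pow_le_pow_of_le_one hu0 hu (by omega)) (pow_nonneg hp w)

theorem hammingNorm_sub_le {ι β : Type*} [Fintype ι] [AddGroup β] [DecidableEq β]
    (x y : ι → β) : hammingNorm (x - y) ≤ hammingNorm x + hammingNorm y := by
  have hdist : hammingNorm (x - y) = hammingDist x y := by
    simp_rw [hammingNorm, hammingDist, Pi.sub_apply, sub_ne_zero]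
  rw [hdist, ← hammingDist_zero_right, ← hammingDist_zero_left]
  exact hammingDist_triangle x 0 y

section SupportFinset

variable {ι R : Type*} [Fintype ι] [Zero R] [DecidableEq R] {f : ι → R} {j : ι}

def supportFinset (f : ι → R) : Finset ι := {j | f j ≠ 0}

@[simp]
theorem mem_supportFinset : j ∈ supportFinset f ↔ f j ≠ 0 := by simp [supportFinset]

theorem card_supportFinset : #(supportFinset f) = hammingNorm f := rfl

theorem supportFinset_indicator (T : Set ι) [DecidablePred (· ∈ T)] :
    supportFinset (T.indicator f) = (supportFinset f).filter (· ∈ T) := by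
  ext j
  by_cases hj : j ∈ T <;> simp [hj]

theorem supportFinset_injective : Function.Injective (supportFinset : (ι → ZMod 2) → Finset ι) := by
  intro f g h
  have key : ∀ a b : ZMod 2, (a ≠ 0 ↔ b ≠ 0) → a = b := by decide
  funext j
  exact key _ _ (by simpa using congrArg (j ∈ ·) h)

end SupportFinset

section LocallyStochastic

variable {ι R : Type*} [Fintype ι] [DecidableEq ι] [Fintype R] [Zero R] [DecidableEq R]

def IsLocallyStochastic (Pr : (ι → R) → ℝ) (p : ℝ) : Prop :=
  ∀ e : ι → R, ∑ e' ∈ univ.filter (fun e' => ∀ i, e i ≠ 0 → e' i ≠ 0), Pr e' ≤ p ^ hammingNorm e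

theorem IsLocallyStochastic.sum_le_sum_image {Pr : (ι → R) → ℝ} {p : ℝ}
    (hloc : IsLocallyStochastic Pr p) (hPr : ∀ e, 0 ≤ Pr e) (F : (ι → R) → ι → R)
    (hF : ∀ e j, F e j ≠ 0 → e j ≠ 0) (s : Finset (ι → R)) :
    ∑ e ∈ s, Pr e ≤ ∑ a ∈ s.image F, p ^ hammingNorm a := by
  rw [← sum_fiberwise_of_maps_to fun e he => mem_image_of_mem F he]
  refine sum_le_sum fun a _ => (sum_le_sum_of_subset_of_nonneg ?_ fun e _ _ => hPr e).trans
    (hloc a)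
  intro e he
  obtain ⟨-, rfl⟩ := mem_filter.1 he
  exact mem_filter.2 ⟨mem_univ e, hF e⟩

end LocallyStochastic

namespace Matrix

variable {κ ι R : Type*}

def columnGraph [Zero R] (H : Matrix κ ι R) : SimpleGraph ι where
  Adj j j' := j ≠ j' ∧ ∃ i, H i j ≠ 0 ∧ H i j' ≠ 0
  symm := ⟨fun _ _ ⟨hne, i, h, h'⟩ => ⟨hne.symm, i, h', h⟩⟩
  loopless := ⟨fun _ h => h.1 rfl⟩

theorem columnGraph_adj [Zero R] {H : Matrix κ ι R} {j j' : ι} :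
    H.columnGraph.Adj j j' ↔ j ≠ j' ∧ ∃ i, H i j ≠ 0 ∧ H i j' ≠ 0 :=
  Iff.rfl

theorem columnGraph_degree_le [Fintype κ] [Fintype ι] [DecidableEq ι] [Zero R] [DecidableEq R]
    {H : Matrix κ ι R} [H.columnGraph.LocallyFinite] {r c : ℕ}
    (hrow : ∀ i, hammingNorm (H i) ≤ r) (hcol : ∀ j, hammingNorm (fun i => H i j) ≤ c) (j : ι) :
    H.columnGraph.degree j ≤ (r - 1) * c := by
  have hsub : H.columnGraph.neighborFinset j ⊆
      ({i | H i j ≠ 0} : Finset κ).biUnion fun i => ({j' | H i j' ≠ 0} : Finset ι).erase j := by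
    intro j' hj'
    obtain ⟨hne, i, hi, hi'⟩ := columnGraph_adj.1 ((H.columnGraph.mem_neighborFinset j j').1 hj')
    simp only [mem_biUnion, mem_filter, mem_univ, true_and, mem_erase]
    exact ⟨i, hi, hne.symm, hi'⟩
  calc H.columnGraph.degree j ≤ _ := card_le_card hsub
    _ ≤ ∑ i ∈ ({i | H i j ≠ 0} : Finset κ), #(({j' | H i j' ≠ 0} : Finset ι).erase j) :=
        card_biUnion_le
    _ ≤ ∑ _i ∈ ({i | H i j ≠ 0} : Finset κ), (r - 1) :=
        sum_le_sum fun i hi => by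
          rw [card_erase_of_mem (by simpa using (mem_filter.1 hi).2)]
          exact Nat.sub_le_sub_right (hrow i) 1
    _ ≤ (r - 1) * c := by
        rw [sum_const, smul_eq_mul, mul_comm]
        exact Nat.mul_le_mul_left _ (hcol j)

variable [Fintype ι]

theorem mulVec_indicator_eq_zero [NonUnitalNonAssocSemiring R] {H : Matrix κ ι R} {f : ι → R}
    (hf : H *ᵥ f = 0) {T : Set ι}
    (hT : ∀ i j j', j ∈ T → H i j ≠ 0 → H i j' ≠ 0 → f j ≠ 0 → f j' ≠ 0 → j' ∈ T) :
    H *ᵥ T.indicator f = 0 := by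
  funext i
  by_cases hi : ∃ j ∈ T, H i j ≠ 0 ∧ f j ≠ 0
  · obtain ⟨j, hj, hHj, hfj⟩ := hi
    rw [← congrFun hf i]
    refine sum_congr rfl fun j' _ => ?_
    by_cases hH : H i j' = 0
    · simp [hH]
    by_cases hf' : f j' = 0
    · simp [hf', Set.indicator_apply_eq_zero.2 fun _ => hf']
    rw [Set.indicator_of_mem (hT i j j' hj hHj hH hfj hf')]
  · simp only [not_exists, not_and, not_not] at hi
    refine sum_eq_zero fun j _ => ?_
    by_cases hj : j ∈ T
    · by_cases hH : H i j = 0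
      · simp [hH]
      · simp [Set.indicator_of_mem hj, hi j hj hH]
    · simp [Set.indicator_of_notMem hj]

variable [Ring R] [DecidableEq R] {H : Matrix κ ι R} {e₀ e f : ι → R} {i : κ} {j j' : ι}

def anchoredSet (H : Matrix κ ι R) (e₀ f : ι → R) : Set ι :=
  {j | ∃ x ∈ supportFinset e₀, H.columnGraph.ReachIn (supportFinset f) j x}

noncomputable def anchoredRep (H : Matrix κ ι R) (e₀ e : ι → R) : ι → R :=
  e₀ + (H.anchoredSet e₀ (e - e₀)).indicator (e - e₀)

theorem mem_anchoredSet_of_ne_zero (hj : e₀ j ≠ 0) : j ∈ H.anchoredSet e₀ f :=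
  ⟨j, mem_supportFinset.2 hj, .refl⟩

theorem mem_anchoredSet_of_mem (hj : j ∈ H.anchoredSet e₀ f) (hHj : H i j ≠ 0) (hHj' : H i j' ≠ 0)
    (hfj : f j ≠ 0) (hfj' : f j' ≠ 0) : j' ∈ H.anchoredSet e₀ f := by
  obtain ⟨x, hx, hreach⟩ := hj
  by_cases hjj' : j' = j
  · exact hjj' ▸ ⟨x, hx, hreach⟩
  · exact ⟨x, hx, .head ⟨mem_supportFinset.2 hfj', mem_supportFinset.2 hfj, hjj', i, hHj', hHj⟩
      hreach⟩

theorem mulVec_anchoredRep (he : H *ᵥ e = H *ᵥ e₀) : H *ᵥ H.anchoredRep e₀ e = H *ᵥ e₀ := by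
  have hsub : H *ᵥ (e - e₀) = 0 := by rw [mulVec_sub, he, sub_self]
  rw [anchoredRep, mulVec_add, mulVec_indicator_eq_zero hsub fun _ _ _ => mem_anchoredSet_of_mem,
    add_zero]

theorem ne_zero_of_anchoredRep_ne_zero (h : H.anchoredRep e₀ e j ≠ 0) : e j ≠ 0 := by
  by_cases hj : j ∈ H.anchoredSet e₀ (e - e₀)
  · simpa [anchoredRep, Set.indicator_of_mem hj] using h
  · have he₀ : e₀ j = 0 := by_contra fun h₀ => hj (mem_anchoredSet_of_ne_zero h₀)
    simp [anchoredRep, Set.indicator_of_notMem hj, he₀] at h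

theorem isAnchored_anchoredRep_sub :
    H.columnGraph.IsAnchored (supportFinset e₀) (supportFinset (H.anchoredRep e₀ e - e₀)) := by
  classical
  rw [anchoredRep, add_sub_cancel_left, supportFinset_indicator]
  intro j hj
  obtain ⟨x, hx, hreach⟩ := (mem_filter.1 hj).2
  exact ⟨x, hx, hreach.filter fun v hv => ⟨x, hx, hv⟩⟩

end Matrix

theorem SimpleGraph.sum_pow_hammingNorm_sub_le_anchoredSum {ι : Type*} [Fintype ι]
    [DecidableEq ι] (G : SimpleGraph ι) {e₀ : ι → ZMod 2} {𝒜 : Finset (ι → ZMod 2)} {u : ℝ}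
    (hu : 0 ≤ u) (h𝒜 : ∀ a ∈ 𝒜, G.IsAnchored (supportFinset e₀) (supportFinset (a - e₀))) :
    ∑ a ∈ 𝒜, u ^ hammingNorm (a - e₀) ≤ G.anchoredSum u univ (supportFinset e₀) := by
  classical
  simp_rw [← card_supportFinset]
  exact sum_le_sum_of_injOn_of_nonneg (fun a => supportFinset (a - e₀))
    (fun a _ b _ h => sub_left_inj.1 (supportFinset_injective h))
    (fun a ha => mem_filter.2 ⟨mem_powerset.2 (subset_univ _), h𝒜 a ha⟩) (fun S => u ^ #S)
    fun _ _ => pow_nonneg hu _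

theorem IsLocallyStochastic.sum_fiber_mulVec_le {κ ι : Type*} [Fintype κ] [DecidableEq κ]
    [Fintype ι] [DecidableEq ι] {Pr : (ι → ZMod 2) → ℝ} {p u : ℝ} (hloc : IsLocallyStochastic Pr p)
    (hPr : ∀ e, 0 ≤ Pr e) (hp : 0 ≤ p) (hpu : p ≤ u) (hu0 : 0 < u) (hu : u ≤ 1)
    {H : Matrix κ ι (ZMod 2)} {e₀ : ι → ZMod 2}
    (hmin : ∀ e, H *ᵥ e = H *ᵥ e₀ → hammingNorm e₀ ≤ hammingNorm e) :
    ∑ e ∈ univ.filter (fun e => H *ᵥ e = H *ᵥ e₀), Pr e ≤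
      p ^ hammingNorm e₀ / u ^ (2 * hammingNorm e₀) *
        H.columnGraph.anchoredSum u univ (supportFinset e₀) := by
  set w := hammingNorm e₀
  set 𝒜 := (univ.filter fun e => H *ᵥ e = H *ᵥ e₀).image (H.anchoredRep e₀)
  calc _ ≤ ∑ a ∈ 𝒜, p ^ hammingNorm a :=
        hloc.sum_le_sum_image hPr _ (fun _ _ => Matrix.ne_zero_of_anchoredRep_ne_zero) _
    _ ≤ ∑ a ∈ 𝒜, p ^ w / u ^ (2 * w) * u ^ hammingNorm (a - e₀) := sum_le_sum fun a ha => by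
        obtain ⟨e, he, rfl⟩ := mem_image.1 ha
        rw [div_mul_eq_mul_div, le_div_iff₀ (by positivity)]
        exact pow_mul_pow_le_pow_mul_pow hp hpu hu
          (hmin _ (Matrix.mulVec_anchoredRep (mem_filter.1 he).2)) (hammingNorm_sub_le _ _)
    _ = p ^ w / u ^ (2 * w) * ∑ a ∈ 𝒜, u ^ hammingNorm (a - e₀) := (mul_sum ..).symm
    _ ≤ _ := by
        refine mul_le_mul_of_nonneg_left (H.columnGraph.sum_pow_hammingNorm_sub_le_anchoredSum
          hu0.le fun a ha => ?_) (by positivity)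
        obtain ⟨e, -, rfl⟩ := mem_image.1 ha
        exact Matrix.isAnchored_anchoredRep_sub

theorem Real.inv_mul_exp_mul_one_add_inv_pow_le {z : ℕ} (hz : 0 < z) :
    ((z : ℝ) * exp 1)⁻¹ * (1 + (z : ℝ)⁻¹) ^ z ≤ (z : ℝ)⁻¹ := by
  calc ((z : ℝ) * exp 1)⁻¹ * (1 + (z : ℝ)⁻¹) ^ z ≤ ((z : ℝ) * exp 1)⁻¹ * exp 1 :=
        mul_le_mul_of_nonneg_left one_add_inv_pow_le_exp (by positivity)
    _ = (z : ℝ)⁻¹ := by field_simp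

/-- **Probability of equivalent error classes (Lemma: prob_equivalent_classes).**
Let `H ∈ F₂^{σ×n}` be an `(r,c)`-LDPC matrix (row weights `≤ r`, column weights `≤ c`,
`r, c ≥ 1`), set `z = (r-1)·c` and `p_z = 1/((1+z)·z·e²)`.  There is a constant `C`
depending only on `z` such that for every locally stochastic distribution `Pr` with rate
`p`, `0 < p < 1/(z·e)`, and every `e ∈ F₂ⁿ`,
`Pr([e]_H) ≤ C · (p/p_z)^{|e|ʳ_H}` where `|e|ʳ_H` is the reduced weight of `e` w.r.t. `H`. -/
theorem stmt_2 (z : ℕ) :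
    ∃ C : ℝ, ∀ (σ n r c : ℕ), 1 ≤ r → 1 ≤ c → (r - 1) * c = z →
      ∀ H : Matrix (Fin σ) (Fin n) (ZMod 2),
        (∀ i, hammingNorm (H i) ≤ r) →
        (∀ j, hammingNorm (fun i => H i j) ≤ c) →
        ∀ (p : ℝ) (Pr : (Fin n → ZMod 2) → ℝ),
          0 < p → p < 1 / ((z : ℝ) * Real.exp 1) →
          (∀ e, 0 ≤ Pr e) → (∑ e, Pr e) = 1 →
          (∀ e : Fin n → ZMod 2,
            (∑ e' ∈ Finset.univ.filter fun e' => ∀ i, e i ≠ 0 → e' i ≠ 0, Pr e')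
              ≤ p ^ hammingNorm e) →
          ∀ e : Fin n → ZMod 2,
            (∑ e' ∈ Finset.univ.filter fun e' => H.mulVec e' = H.mulVec e, Pr e')
              ≤ C * (p / (1 / ((1 + (z : ℝ)) * (z : ℝ) * Real.exp 1 ^ 2))) ^
                  sInf {w | ∃ e' : Fin n → ZMod 2,
                    H.mulVec e' = H.mulVec e ∧ hammingNorm e' = w} := by
  classical
  refine ⟨1, fun σ n r c _ _ hrc H hrow hcol p Pr hp hpz hPr _ hloc e => ?_⟩
  have hz : 0 < z := Nat.pos_of_ne_zero fun hz => by simp [hz] at hpz; linarith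
  set u : ℝ := ((z : ℝ) * Real.exp 1)⁻¹
  have hu0 : 0 < u := inv_pos.2 (mul_pos (Nat.cast_pos.2 hz) (Real.exp_pos 1))
  have hu1 : u ≤ 1 := inv_le_one_of_one_le₀ (one_le_mul_of_one_le_of_one_le
    (Nat.one_le_cast.2 hz) (Real.one_le_exp zero_le_one))
  obtain ⟨e₀, he₀, hw⟩ := Nat.sInf_mem (⟨_, e, rfl, rfl⟩ :
    {w | ∃ e' : Fin n → ZMod 2, H *ᵥ e' = H *ᵥ e ∧ hammingNorm e' = w}.Nonempty)
  have hmin : ∀ e', H *ᵥ e' = H *ᵥ e₀ → hammingNorm e₀ ≤ hammingNorm e' :=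
    fun e' h => hw ▸ Nat.sInf_le ⟨e', h.trans he₀, rfl⟩
  have hdeg : ∀ j, H.columnGraph.degree j ≤ z := fun j => hrc ▸ H.columnGraph_degree_le hrow hcol j
  -- `hloc` decides `∀ i : Fin n` by `Nat.decidableForallFin` rather than through `Fintype`.
  have hloc' : IsLocallyStochastic Pr p := fun e' => by convert hloc e'
  rw [← hw, ← he₀]
  calc _ ≤ p ^ hammingNorm e₀ / u ^ (2 * hammingNorm e₀) *
        H.columnGraph.anchoredSum u univ (supportFinset e₀) :=
      hloc'.sum_fiber_mulVec_le hPr hp.le (by rw [one_div] at hpz; exact hpz.le) hu0 hu1 hmin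
    _ ≤ p ^ hammingNorm e₀ / u ^ (2 * hammingNorm e₀) * (1 + (z : ℝ)⁻¹) ^ hammingNorm e₀ := by
      refine mul_le_mul_of_nonneg_left ?_ (by positivity)
      rw [← card_supportFinset]
      exact SimpleGraph.anchoredSum_le_pow hdeg hu0.le (by positivity)
        (Real.inv_mul_exp_mul_one_add_inv_pow_le hz) _ _
    _ = _ := by
      rw [pow_mul, ← div_pow, ← mul_pow, one_mul]
      congr 1
      simp only [u]
      field_simp
      ring
end

section
/- Let Pr be a probability distribution on F_2^n that is locally stochastic with rate p, let H ∈ F_2^{r×n}, and let dec : F_2^n → F_2^n be a minimum-weight decoder, i.e., a function satisfying H·dec(e) = H·e and |dec(e)| ≤ |e'| for every e' with H e' = H e. Then for every g ∈ F_2^n, the probability of the residual error being g satisfies Pr({e ∈ F_2^n : e + dec(e) = g}) ≤ (2√p)^{|g|}. -/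
/-- **Locally stochastic residual error under a minimum-weight decoder.**
If `Pr` is locally stochastic with rate `p` and `dec` is a minimum-weight decoder for the
check matrix `H` (i.e. `H·dec(e) = H·e` and `dec(e)` has minimum weight in the coset),
then for every `g`, the probability that the residual error `e + dec(e)` equals `g` is at
most `(2√p)^{|g|}`. -/
theorem stmt_3 (n r : ℕ) (H : Matrix (Fin r) (Fin n) (ZMod 2))
    (p : ℝ) (Pr : (Fin n → ZMod 2) → ℝ)
    (hnn : ∀ e, 0 ≤ Pr e) (hsum : (∑ e, Pr e) = 1)
    (hls : ∀ e : Fin n → ZMod 2,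
      (∑ e' ∈ Finset.univ.filter fun e' => ∀ i, e i ≠ 0 → e' i ≠ 0, Pr e')
        ≤ p ^ hammingNorm e)
    (dec : (Fin n → ZMod 2) → (Fin n → ZMod 2))
    (hdec : ∀ e, H.mulVec (dec e) = H.mulVec e)
    (hmin : ∀ e e', H.mulVec e' = H.mulVec e → hammingNorm (dec e) ≤ hammingNorm e')
    (g : Fin n → ZMod 2) :
    (∑ e ∈ Finset.univ.filter fun e => e + dec e = g, Pr e)
      ≤ (2 * Real.sqrt p) ^ hammingNorm g := by
  classical
  have hLHS1 : (∑ e ∈ Finset.univ.filter fun e => e + dec e = g, Pr e) ≤ 1 := by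
    rw [← hsum]
    exact Finset.sum_le_sum_of_subset_of_nonneg (Finset.filter_subset _ _)
      (fun e _ _ => hnn e)
  by_cases hbig : (1:ℝ) ≤ 2 * Real.sqrt p
  · exact hLHS1.trans (one_le_pow₀ hbig)
  push_neg at hbig
  set w := hammingNorm g with hw
  rcases Nat.eq_zero_or_pos w with h0 | hwpos
  · rw [h0, pow_zero]; exact hLHS1
  set G : Finset (Fin n) := Finset.univ.filter (fun i => g i ≠ 0) with hGdef
  have hwG : G.card = w := by
    rw [hw]; unfold hammingNorm; congr 1
  have hGne : G.Nonempty := by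
    rw [← Finset.card_pos, hwG]; exact hwpos
  obtain ⟨i₀, hi₀⟩ := hGne
  -- indicator
  set ind : Finset (Fin n) → (Fin n → ZMod 2) :=
    fun T i => if i ∈ T then 1 else 0 with hinddef
  have hind : ∀ T, hammingNorm (ind T) = T.card := by
    intro T
    unfold hammingNorm
    congr 1
    ext i
    by_cases h : i ∈ T <;> simp [ind, h]
  have hp0 : 0 ≤ p := by
    have h := hls (ind {i₀})
    rw [hind, Finset.card_singleton, pow_one] at h
    refine le_trans ?_ h
    exact Finset.sum_nonneg fun e _ => hnn e
  have hsp1 : Real.sqrt p ≤ 1 := by nlinarith [Real.sqrt_nonneg p]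
  -- key combinatorial lemma
  have key : ∀ e : Fin n → ZMod 2, e + dec e = g →
      w ≤ 2 * ((Finset.univ.filter fun i => e i ≠ 0) ∩ G).card := by
    intro e he
    have hdece : dec e = e + g := by
      funext i
      have h1 : e i + dec e i = g i := by simpa using congrFun he i
      have h2 : ∀ a b c : ZMod 2, a + b = c → b = a + c := by decide
      simpa using h2 _ _ _ h1
    have hle : hammingNorm (e + g) ≤ hammingNorm e := by
      rw [← hdece]; exact hmin e e rfl
    set A : Finset (Fin n) := Finset.univ.filter (fun i => e i ≠ 0) with hAdef
    have hB : (Finset.univ.filter fun i => (e + g) i ≠ 0) = (A \ G) ∪ (G \ A) := by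
      ext i
      simp only [A, G, Finset.mem_union, Finset.mem_sdiff, Finset.mem_filter,
        Finset.mem_univ, true_and, Pi.add_apply]
      generalize e i = a; generalize g i = c
      revert a c; decide
    have hAc : hammingNorm e = A.card := by
      unfold hammingNorm; congr 1
    have hBc : hammingNorm (e + g) = (A \ G).card + (G \ A).card := by
      unfold hammingNorm
      rw [show ({i | (e + g) i ≠ 0} : Finset (Fin n)) =
        (Finset.univ.filter fun i => (e + g) i ≠ 0) from by congr 1, hB]
      exact Finset.card_union_of_disjoint disjoint_sdiff_sdiff
    have e1 : (A \ G).card + (A ∩ G).card = A.card := Finset.card_sdiff_add_card_inter A G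
    have e2 : (G \ A).card + (G ∩ A).card = G.card := Finset.card_sdiff_add_card_inter G A
    have e3 : (G ∩ A) = (A ∩ G) := Finset.inter_comm G A
    rw [hAc, hBc] at hle
    rw [e3] at e2
    rw [← hwG, ← e2]
    omega
  -- fiberwise decomposition
  set D : Finset (Fin n → ZMod 2) := Finset.univ.filter (fun e => e + dec e = g) with hDdef
  set Sf : (Fin n → ZMod 2) → Finset (Fin n) :=
    fun e => (Finset.univ.filter fun i => e i ≠ 0) ∩ G with hSfdef
  have hfib := Finset.sum_fiberwise D Sf Pr
  have step1 : ∀ T : Finset (Fin n),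
      (∑ e ∈ D.filter fun e => Sf e = T, Pr e)
        ≤ if T ⊆ G ∧ w ≤ 2 * T.card then p ^ T.card else 0 := by
    intro T
    rcases (D.filter fun e => Sf e = T).eq_empty_or_nonempty with hemp | ⟨e₀, he₀⟩
    · rw [hemp, Finset.sum_empty]
      split
      · positivity
      · exact le_refl _
    · have he₀' := Finset.mem_filter.mp he₀
      have he₀D := (Finset.mem_filter.mp he₀'.1).2
      have hSfT : Sf e₀ = T := he₀'.2
      have hTsub : T ⊆ G := hSfT ▸ Finset.inter_subset_right
      have hTw : w ≤ 2 * T.card := by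
        rw [← hSfT]; exact key e₀ he₀D
      rw [if_pos ⟨hTsub, hTw⟩]
      calc (∑ e ∈ D.filter fun e => Sf e = T, Pr e)
          ≤ ∑ e' ∈ Finset.univ.filter fun e' => ∀ i, ind T i ≠ 0 → e' i ≠ 0, Pr e' := by
            apply Finset.sum_le_sum_of_subset_of_nonneg _ (fun e _ _ => hnn e)
            intro e he
            have he' := Finset.mem_filter.mp he
            rw [Finset.mem_filter]
            refine ⟨Finset.mem_univ _, fun i hi => ?_⟩
            have hiT : i ∈ T := by
              by_contra h; simp [ind, h] at hi
            rw [← he'.2] at hiT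
            exact (Finset.mem_filter.mp (Finset.mem_inter.mp hiT).1).2
        _ ≤ p ^ T.card := by simpa [hind T] using hls (ind T)
  calc (∑ e ∈ Finset.univ.filter fun e => e + dec e = g, Pr e)
      = ∑ T : Finset (Fin n), ∑ e ∈ D.filter fun e => Sf e = T, Pr e := hfib.symm
    _ ≤ ∑ T : Finset (Fin n), if T ⊆ G ∧ w ≤ 2 * T.card then p ^ T.card else 0 :=
        Finset.sum_le_sum fun T _ => step1 T
    _ = ∑ T ∈ Finset.univ.filter fun T => T ⊆ G ∧ w ≤ 2 * T.card, p ^ T.card :=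
        (Finset.sum_filter _ _).symm
    _ ≤ ∑ T ∈ Finset.univ.filter fun T => T ⊆ G ∧ w ≤ 2 * T.card, (Real.sqrt p) ^ w := by
        refine Finset.sum_le_sum fun T hT => ?_
        have hTw := (Finset.mem_filter.mp hT).2.2
        have h1 : p ^ T.card = (Real.sqrt p) ^ (2 * T.card) := by
          rw [pow_mul, Real.sq_sqrt hp0]
        rw [h1]
        exact pow_le_pow_of_le_one (Real.sqrt_nonneg p) hsp1 hTw
    _ ≤ ∑ T ∈ G.powerset, (Real.sqrt p) ^ w := by
        refine Finset.sum_le_sum_of_subset_of_nonneg ?_ (fun T _ _ => by positivity)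
        intro T hT
        exact Finset.mem_powerset.mpr (Finset.mem_filter.mp hT).2.1
    _ = (2 * Real.sqrt p) ^ w := by
        rw [Finset.sum_const, Finset.card_powerset, hwG, nsmul_eq_mul, mul_pow]
        push_cast
        ring
end

section
/- Let G = (A ∪ B, E) be a finite bipartite graph in which every vertex of A has degree Δ_A, and suppose G is (γ_A, δ_A)-left-expanding with δ_A < 1/2. Then for every subset S ⊆ A with |S| ≤ γ_A·|A|, the set Γ_u(S) of unique neighbors of S satisfies |Γ_u(S)| ≥ (1 − 2δ_A)·Δ_A·|S|. -/
/-- **Unique-neighbor expansion (Sipser–Spielman).**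
Let `G = (A ∪ B, E)` be a finite bipartite graph in which every vertex of `A` has degree
`Δ_A`, and suppose `G` is `(γ_A, δ_A)`-left-expanding with `δ_A < 1/2`.  Then for every
`S ⊆ A` with `|S| ≤ γ_A·|A|`, the set of unique neighbors of `S` has size at least
`(1 - 2δ_A)·Δ_A·|S|`. -/
theorem stmt_4 {A B : Type*} [Fintype A] [Fintype B]
    (E : A → B → Prop) (ΔA : ℕ)
    (hdeg : ∀ a : A, ({b | E a b} : Set B).ncard = ΔA)
    (γA δA : ℝ) (hδ : δA < 1 / 2)
    (hexp : ∀ S : Finset A, (S.card : ℝ) ≤ γA * Fintype.card A →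
      (1 - δA) * ΔA * S.card ≤ (({b | ∃ a ∈ S, E a b} : Set B).ncard : ℝ)) :
    ∀ S : Finset A, (S.card : ℝ) ≤ γA * Fintype.card A →
      (1 - 2 * δA) * ΔA * S.card
        ≤ (({b | ∃! a, a ∈ S ∧ E a b} : Set B).ncard : ℝ) := by
  classical
  intro S hS
  set d : B → ℕ := fun b => (S.filter (fun a => E a b)).card with hd
  set N : Finset B := Finset.univ.filter (fun b => ∃ a ∈ S, E a b) with hN
  set U : Finset B := Finset.univ.filter (fun b => d b = 1) with hU
  -- total edge count
  have hsum : ∑ b : B, d b = ΔA * S.card := by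
    have hdeg' : ∀ a : A, (Finset.univ.filter (fun b => E a b)).card = ΔA := by
      intro a
      have := hdeg a
      rwa [Set.ncard_eq_toFinset_card', Set.toFinset_setOf] at this
    calc ∑ b : B, d b = ∑ b : B, ∑ a ∈ S, if E a b then 1 else 0 := by
          refine Finset.sum_congr rfl fun b _ => ?_
          simp only [hd]
          exact Finset.card_filter _ _
      _ = ∑ a ∈ S, ∑ b : B, if E a b then 1 else 0 := Finset.sum_comm
      _ = ∑ a ∈ S, ΔA := by
          refine Finset.sum_congr rfl fun a _ => ?_
          rw [← Finset.card_filter]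
          exact hdeg' a
      _ = ΔA * S.card := by rw [Finset.sum_const, smul_eq_mul, mul_comm]
  have hsumN : ∑ b ∈ N, d b = ΔA * S.card := by
    rw [← hsum]
    apply Finset.sum_subset (Finset.subset_univ _)
    intro b _ hb
    simp only [hN, Finset.mem_filter, Finset.mem_univ, true_and] at hb
    push_neg at hb
    simp only [hd]
    simp only [Finset.card_eq_zero, Finset.filter_eq_empty_iff]
    exact fun a ha => hb a ha
  have hUN : U ⊆ N := by
    intro b hb
    simp only [hU, Finset.mem_filter, Finset.mem_univ, true_and] at hb
    simp only [hN, Finset.mem_filter, Finset.mem_univ, true_and]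
    have hpos : 0 < (S.filter (fun a => E a b)).card := by
      rw [show (S.filter (fun a => E a b)).card = d b from rfl, hb]
      norm_num
    obtain ⟨a, ha⟩ := Finset.card_pos.mp hpos
    simp only [Finset.mem_filter] at ha
    exact ⟨a, ha.1, ha.2⟩
  have hfe : N.filter (fun b => d b = 1) = U := by
    apply Finset.Subset.antisymm
    · intro b hb
      simp only [Finset.mem_filter] at hb
      simp only [hU, Finset.mem_filter, Finset.mem_univ, true_and]
      exact hb.2
    · intro b hb
      have hbn := hUN hb
      simp only [hU, Finset.mem_filter, Finset.mem_univ, true_and] at hb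
      exact Finset.mem_filter.mpr ⟨hbn, hb⟩
  -- key inequality: 2 |N| ≤ ΔA |S| + |U|
  have hkey : 2 * N.card ≤ ΔA * S.card + U.card := by
    have h1 : ∀ b ∈ N, 2 ≤ d b + (if d b = 1 then 1 else 0) := by
      intro b hb
      simp only [hN, Finset.mem_filter, Finset.mem_univ, true_and] at hb
      obtain ⟨a, haS, hab⟩ := hb
      have hpos : 1 ≤ d b := by
        simp only [hd]
        exact Finset.card_pos.mpr ⟨a, Finset.mem_filter.mpr ⟨haS, hab⟩⟩
      split <;> omega
    have h2 : 2 * N.card ≤ ∑ b ∈ N, d b + U.card := by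
      calc 2 * N.card = ∑ _b ∈ N, 2 := by rw [Finset.sum_const, smul_eq_mul, mul_comm]
        _ ≤ ∑ b ∈ N, (d b + if d b = 1 then 1 else 0) := Finset.sum_le_sum h1
        _ = ∑ b ∈ N, d b + ∑ b ∈ N, (if d b = 1 then 1 else 0) := Finset.sum_add_distrib
        _ = ∑ b ∈ N, d b + U.card := by
            rw [show (∑ b ∈ N, if d b = 1 then 1 else 0)
                = (N.filter (fun b => d b = 1)).card from (Finset.card_filter _ _).symm, hfe]
    omega
  -- identify ncards with Finset cards
  have hNcard : (({b | ∃ a ∈ S, E a b} : Set B).ncard : ℕ) = N.card := by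
    rw [Set.ncard_eq_toFinset_card', Set.toFinset_setOf]
  have hUcard : (({b | ∃! a, a ∈ S ∧ E a b} : Set B).ncard : ℕ) = U.card := by
    rw [Set.ncard_eq_toFinset_card', Set.toFinset_setOf]
    congr 1
    apply Finset.filter_congr
    intro b _
    simp only [hU, hd]
    constructor
    · rintro ⟨a, ⟨haS, hab⟩, huniq⟩
      rw [Finset.card_eq_one]
      refine ⟨a, ?_⟩
      ext x
      simp only [Finset.mem_filter, Finset.mem_singleton]
      constructor
      · rintro ⟨hx1, hx2⟩; exact huniq x ⟨hx1, hx2⟩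
      · rintro rfl; exact ⟨haS, hab⟩
    · intro h
      rw [Finset.card_eq_one] at h
      obtain ⟨a, ha⟩ := h
      have haa : a ∈ S.filter (fun a => E a b) := ha ▸ Finset.mem_singleton_self a
      simp only [Finset.mem_filter] at haa
      refine ⟨a, haa, fun x hx => ?_⟩
      have hxm : x ∈ S.filter (fun a => E a b) := Finset.mem_filter.mpr hx
      rw [ha, Finset.mem_singleton] at hxm
      exact hxm
  have hexpS := hexp S hS
  rw [hNcard] at hexpS
  rw [hUcard]
  have hkeyR : 2 * (N.card : ℝ) ≤ (ΔA : ℝ) * S.card + U.card := by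
    exact_mod_cast hkey
  nlinarith [hexpS, hkeyR]
end

section
/- Let H_1 ∈ F_2^{r_1×n_1} and H_2 ∈ F_2^{r_2×n_2}, and suppose the transpose H_1^T is (γ, δ)-expanding with δ < 1/4 (in particular every column of H_1^T has the same weight). Define the matrix D̃_Z = ( H_1 ⊗ I_{n_2} | I_{r_1} ⊗ H_2^T ) ∈ F_2^{(r_1 n_2)×(n_1 n_2 + r_1 r_2)}. Then for every h ∈ F_2^{r_1 n_2}, the vector f = D̃_Z^T h ∈ F_2^{n_1 n_2 + r_1 r_2} satisfies |f| ≥ min{ |h|^r_{I_{r_1}⊗H_2} , d(H_1^T) , γ·r_1 }, where |h|^r_{I_{r_1}⊗H_2} = min{ |h'| : (I_{r_1}⊗H_2) h' = (I_{r_1}⊗H_2) h } and d(H_1^T) = min{ |w| : w ∈ F_2^{r_1}, w ≠ 0, H_1^T w = 0 } (this term being +∞, i.e. omitted from the minimum, when H_1^T has trivial kernel). -/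
/-!
Write `h` as the matrix `X` whose rows `Xᵢ` are the blocks `h(i, ·)`. Then the two components
of `f` are the rows of `H₁ᵀX` and the syndromes `H₂Xᵢ`, and `|h|ʳ ≤ ∑ᵢ ρ(Xᵢ)`, where `ρ` is the
reduced weight with respect to `H₂`. If more than `γ r₁` rows have a nonzero syndrome, the second
component alone is heavy enough. Otherwise `∑ᵢ ρ(Xᵢ) ≤ ∑ⱼ ρ((H₁ᵀX)ⱼ) ≤ |H₁ᵀX|`, by induction on
the set `T` of rows with nonzero syndrome: expansion with `δ < 1/4` yields a row `i₀ ∈ T` with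
more than `Δ/2` unique neighbours relative to `T`. Zeroing row `i₀` lowers the left side by
`ρ(X_{i₀})`; it clears the syndrome of every unique neighbour, whose reduced weight was
`ρ(X_{i₀})`, and raises that of any other neighbour by at most `ρ(X_{i₀})`, so the right side
drops at least as much. Degree `Δ = 0` means `H₁ᵀ = 0`, and then `d(H₁ᵀ) = 1`.
-/

open Matrix Kronecker
open scoped ENNReal

open Finset

theorem hammingNorm_add_le {ι β : Type*} [Fintype ι] [AddZeroClass β] [DecidableEq β]
    (x y : ι → β) : hammingNorm (x + y) ≤ hammingNorm x + hammingNorm y := by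
  classical
  refine (card_le_card fun i hi => ?_).trans (card_union_le _ _)
  simp only [mem_filter, mem_union, mem_univ, true_and, Pi.add_apply] at hi ⊢
  by_contra! h
  simp [h.1, h.2] at hi

theorem hammingNorm_pi_single {ι β : Type*} [Fintype ι] [DecidableEq ι] [Zero β]
    [DecidableEq β] (i : ι) {b : β} (hb : b ≠ 0) : hammingNorm (Pi.single i b : ι → β) = 1 :=
  card_eq_one.2 ⟨i, by ext j; by_cases h : j = i <;> simp [h, hb]⟩

section ReducedWeight

variable {m n K : Type*} [Fintype n] [Field K] [DecidableEq K]

noncomputable def reducedWeight (H : Matrix m n K) (v : n → K) : ℕ :=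
  sInf {w | ∃ v', H *ᵥ v' = H *ᵥ v ∧ hammingNorm v' = w}

theorem exists_hammingNorm_eq_reducedWeight (H : Matrix m n K) (v : n → K) :
    ∃ v', H *ᵥ v' = H *ᵥ v ∧ hammingNorm v' = reducedWeight H v :=
  Nat.sInf_mem (s := {w | ∃ v', H *ᵥ v' = H *ᵥ v ∧ hammingNorm v' = w}) ⟨_, v, rfl, rfl⟩

variable {H : Matrix m n K}

theorem reducedWeight_le {v v' : n → K} (h : H *ᵥ v' = H *ᵥ v) :
    reducedWeight H v ≤ hammingNorm v' :=
  Nat.sInf_le ⟨v', h, rfl⟩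

theorem reducedWeight_le_hammingNorm (v : n → K) : reducedWeight H v ≤ hammingNorm v :=
  reducedWeight_le rfl

theorem reducedWeight_congr {v w : n → K} (h : H *ᵥ v = H *ᵥ w) :
    reducedWeight H v = reducedWeight H w := by
  rw [reducedWeight, reducedWeight, h]

theorem reducedWeight_eq_zero {v : n → K} (h : H *ᵥ v = 0) : reducedWeight H v = 0 :=
  Nat.le_zero.1 <| by simpa using reducedWeight_le (H := H) (v' := 0) (by rw [mulVec_zero, h])

theorem reducedWeight_add_le (v w : n → K) :
    reducedWeight H (v + w) ≤ reducedWeight H v + reducedWeight H w := by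
  obtain ⟨v', hv, hv'⟩ := exists_hammingNorm_eq_reducedWeight H v
  obtain ⟨w', hw, hw'⟩ := exists_hammingNorm_eq_reducedWeight H w
  rw [← hv', ← hw']
  exact (reducedWeight_le (by rw [mulVec_add, mulVec_add, hv, hw])).trans
    (hammingNorm_add_le v' w')

theorem reducedWeight_smul_le (c : K) (v : n → K) :
    reducedWeight H (c • v) ≤ reducedWeight H v := by
  obtain ⟨v', hv, hv'⟩ := exists_hammingNorm_eq_reducedWeight H v
  rw [← hv']
  exact (reducedWeight_le (v' := c • v') (by rw [mulVec_smul, mulVec_smul, hv])).trans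
    hammingNorm_smul_le_hammingNorm

theorem reducedWeight_smul {c : K} (hc : c ≠ 0) (v : n → K) :
    reducedWeight H (c • v) = reducedWeight H v := by
  refine (reducedWeight_smul_le c v).antisymm ?_
  have := reducedWeight_smul_le (H := H) c⁻¹ (c • v)
  rwa [smul_smul, inv_mul_cancel₀ hc, one_smul] at this

theorem reducedWeight_sub_smul_le (c : K) (v w : n → K) :
    reducedWeight H (v - c • w) ≤ reducedWeight H v + reducedWeight H w := by
  rw [sub_eq_add_neg, ← neg_smul]
  exact (reducedWeight_add_le _ _).trans (Nat.add_le_add_left (reducedWeight_smul_le _ _) _)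

end ReducedWeight

theorem sum_reducedWeight_updateRow_zero {ι m n K : Type*} [Fintype ι] [DecidableEq ι]
    [Fintype n] [Field K] [DecidableEq K] (H : Matrix m n K) (X : Matrix ι n K) (i₀ : ι) :
    ∑ i, reducedWeight H (X i) =
      reducedWeight H (X i₀) + ∑ i, reducedWeight H (X.updateRow i₀ 0 i) := by
  rw [← add_sum_erase _ _ (mem_univ i₀),
    ← add_sum_erase _ (fun i => reducedWeight H (X.updateRow i₀ 0 i)) (mem_univ i₀),
    updateRow_self, reducedWeight_eq_zero (mulVec_zero H), zero_add]
  exact congrArg _ (sum_congr rfl fun i hi => by rw [updateRow_ne (ne_of_mem_erase hi)])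

section Kronecker

variable {ι κ m n R : Type*} [Fintype ι] [Fintype m] [Fintype n]

theorem hammingNorm_vec [Zero R] [DecidableEq R] (Y : Matrix m n R) :
    hammingNorm (vec Y) = ∑ j, hammingNorm (Yᵀ j) := by
  simp only [hammingNorm, card_filter, Fintype.sum_prod_type]
  rfl

variable [CommSemiring R] [DecidableEq R]

theorem hammingNorm_one_kronecker_mulVec_vec [DecidableEq ι] (H : Matrix m n R)
    (X : Matrix ι n R) :
    hammingNorm (((1 : Matrix ι ι R) ⊗ₖ H) *ᵥ vec Xᵀ) = ∑ i, hammingNorm (H *ᵥ X i) := by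
  rw [kronecker_mulVec_vec, transpose_one, Matrix.mul_one, hammingNorm_vec, transpose_mul,
    transpose_transpose]
  simp only [mul_apply_eq_vecMul, vecMul_transpose]

theorem hammingNorm_kronecker_one_mulVec_vec [Fintype κ] [DecidableEq n] (M : Matrix κ ι R)
    (X : Matrix ι n R) :
    hammingNorm ((M ⊗ₖ (1 : Matrix n n R)) *ᵥ vec Xᵀ) = ∑ j, hammingNorm ((M * X) j) := by
  rw [kronecker_mulVec_vec, Matrix.one_mul, hammingNorm_vec, ← transpose_mul, transpose_transpose]

end Kronecker

theorem reducedWeight_one_kronecker_vec_le {ι m n K : Type*} [Fintype ι] [DecidableEq ι]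
    [Fintype n] [Field K] [DecidableEq K] (H : Matrix m n K) (X : Matrix ι n K) :
    reducedWeight ((1 : Matrix ι ι K) ⊗ₖ H) (vec Xᵀ) ≤ ∑ i, reducedWeight H (X i) := by
  choose G hG hGw using fun i => exists_hammingNorm_eq_reducedWeight H (X i)
  have hsyndrome : ((1 : Matrix ι ι K) ⊗ₖ H) *ᵥ vec (of G)ᵀ =
      ((1 : Matrix ι ι K) ⊗ₖ H) *ᵥ vec Xᵀ := by
    simp only [kronecker_mulVec_vec]
    congr 2
    ext k i
    exact congrFun (hG i) k
  calc _ ≤ hammingNorm (vec (of G)ᵀ) := reducedWeight_le hsyndrome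
    _ = _ := by rw [hammingNorm_vec]; exact sum_congr rfl fun i _ => hGw i

theorem sum_card_eq_sum_card_filter_mem {ι α : Type*} [Fintype α] [DecidableEq α]
    (A : ι → Finset α) (T : Finset ι) : ∑ i ∈ T, #(A i) = ∑ a, #{i ∈ T | a ∈ A i} := by
  have := sum_card_bipartiteAbove_eq_sum_card_bipartiteBelow (s := univ) (t := T)
    (r := fun a i => a ∈ A i)
  simpa [bipartiteAbove, bipartiteBelow] using this.symm

section UniqueNeighbors

variable {ι α : Type*} [DecidableEq ι] [DecidableEq α]

def uniqueNeighbors (A : ι → Finset α) (T : Finset ι) (i : ι) : Finset α :=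
  A i \ (T.erase i).biUnion A

variable (A : ι → Finset α) (T : Finset ι)

theorem two_le_card_filter_mem_add_card_filter_mem_uniqueNeighbors {a : α}
    (ha : a ∈ T.biUnion A) :
    2 ≤ #{i ∈ T | a ∈ A i} + #{i ∈ T | a ∈ uniqueNeighbors A T i} := by
  obtain ⟨i, hiT, hai⟩ := mem_biUnion.1 ha
  have hi : i ∈ {i ∈ T | a ∈ A i} := mem_filter.2 ⟨hiT, hai⟩
  have : 0 < #{i ∈ T | a ∈ A i} := card_pos.2 ⟨i, hi⟩
  by_cases hle : #{i ∈ T | a ∈ A i} ≤ 1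
  · have hunique : a ∈ uniqueNeighbors A T i := by
      simp only [uniqueNeighbors, mem_sdiff, mem_biUnion, mem_erase, not_exists, not_and]
      exact ⟨hai, fun i' ⟨hi'i, hi'T⟩ hai' =>
        hi'i (card_le_one.1 hle _ (mem_filter.2 ⟨hi'T, hai'⟩) _ hi)⟩
    have : 0 < #{i ∈ T | a ∈ uniqueNeighbors A T i} :=
      card_pos.2 ⟨i, mem_filter.2 ⟨hiT, hunique⟩⟩
    omega
  · omega

theorem two_mul_card_biUnion_le [Fintype α] {Δ : ℕ} (hA : ∀ i ∈ T, #(A i) = Δ) :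
    2 * #(T.biUnion A) ≤ Δ * #T + ∑ i ∈ T, #(uniqueNeighbors A T i) :=
  calc 2 * #(T.biUnion A) = ∑ _a ∈ T.biUnion A, 2 := by rw [sum_const, smul_eq_mul, mul_comm]
    _ ≤ ∑ a ∈ T.biUnion A, (#{i ∈ T | a ∈ A i} + #{i ∈ T | a ∈ uniqueNeighbors A T i}) :=
      sum_le_sum fun a ha => two_le_card_filter_mem_add_card_filter_mem_uniqueNeighbors A T ha
    _ ≤ ∑ a, (#{i ∈ T | a ∈ A i} + #{i ∈ T | a ∈ uniqueNeighbors A T i}) :=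
      sum_le_sum_of_subset (subset_univ _)
    _ = ∑ i ∈ T, #(A i) + ∑ i ∈ T, #(uniqueNeighbors A T i) := by
      rw [sum_add_distrib, sum_card_eq_sum_card_filter_mem A T,
        sum_card_eq_sum_card_filter_mem (uniqueNeighbors A T) T]
    _ = Δ * #T + ∑ i ∈ T, #(uniqueNeighbors A T i) := by
      rw [sum_congr rfl hA, sum_const, smul_eq_mul, mul_comm]

theorem exists_lt_two_mul_card_uniqueNeighbors [Fintype α] {δ : ℝ} (hδ : δ < 1 / 4) {Δ : ℕ}
    (hΔ : 0 < Δ) (hA : ∀ i ∈ T, #(A i) = Δ) (hT : T.Nonempty)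
    (hexp : (1 - δ) * Δ * #T ≤ #(T.biUnion A)) :
    ∃ i ∈ T, Δ < 2 * #(uniqueNeighbors A T i) := by
  refine exists_lt_of_sum_lt ?_
  have hcount : (2 * #(T.biUnion A) : ℝ) ≤ Δ * #T + ∑ i ∈ T, #(uniqueNeighbors A T i) := by
    exact_mod_cast two_mul_card_biUnion_le A T hA
  push_cast at hcount
  have hpos : (0 : ℝ) < Δ * #T := by
    have := hT.card_pos
    positivity
  have : (∑ _i ∈ T, Δ : ℝ) < ∑ i ∈ T, (2 * #(uniqueNeighbors A T i) : ℝ) := by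
    rw [sum_const, nsmul_eq_mul, ← mul_sum]
    nlinarith [mul_pos (sub_pos.2 hδ) hpos]
  exact_mod_cast this

end UniqueNeighbors

def colSupport {ι κ R : Type*} [Fintype κ] [Zero R] [DecidableEq R] (M : Matrix κ ι R) (i : ι) :
    Finset κ :=
  {j | M j i ≠ 0}

theorem coe_biUnion_colSupport {ι κ R : Type*} [Fintype κ] [DecidableEq κ] [Zero R]
    [DecidableEq R] (M : Matrix κ ι R) (T : Finset ι) :
    (T.biUnion (colSupport M) : Set κ) = {j | ∃ i ∈ T, M j i ≠ 0} := by
  ext j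
  simp [colSupport]

section RowOperations

variable {ι κ m n R : Type*} [Fintype ι] [CommRing R]

theorem mulVec_mul_apply [Fintype n] (H : Matrix m n R) (M : Matrix κ ι R) (X : Matrix ι n R)
    (j : κ) : H *ᵥ (M * X) j = ∑ i, M j i • H *ᵥ X i := by
  rw [mul_apply_eq_vecMul, vecMul_eq_sum, mulVec_sum]
  simp_rw [mulVec_smul]

theorem mul_updateRow_zero_apply [DecidableEq ι] (M : Matrix κ ι R) (X : Matrix ι n R)
    (i₀ : ι) (j : κ) : (M * X.updateRow i₀ 0) j = (M * X) j - M j i₀ • X i₀ := by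
  ext c
  have : ∀ i, M j i * X.updateRow i₀ 0 i c =
      M j i * X i c - if i = i₀ then M j i₀ * X i₀ c else 0 := by
    intro i
    by_cases h : i = i₀
    · subst h
      simp
    · simp [h]
  simp only [mul_apply, this, sum_sub_distrib, sum_ite_eq', mem_univ, if_true, Pi.sub_apply,
    Pi.smul_apply, smul_eq_mul]

end RowOperations

section Syndrome

variable {ι κ m n K : Type*} [Fintype ι] [Fintype κ] [Fintype m] [Fintype n] [Field K]
  [DecidableEq K]

def syndromeSupport (H : Matrix m n K) (X : Matrix ι n K) : Finset ι := {i | H *ᵥ X i ≠ 0}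

variable {H : Matrix m n K} (M : Matrix κ ι K) (X : Matrix ι n K)

theorem sum_reducedWeight_eq_zero (h : syndromeSupport H X = ∅) :
    ∑ i, reducedWeight H (X i) = 0 :=
  sum_eq_zero fun i _ => reducedWeight_eq_zero <| by
    simpa [syndromeSupport] using filter_eq_empty_iff.1 h (mem_univ i)

theorem card_syndromeSupport_le : #(syndromeSupport H X) ≤ ∑ i, hammingNorm (H *ᵥ X i) :=
  calc #(syndromeSupport H X) = ∑ _i ∈ syndromeSupport H X, 1 := card_eq_sum_ones _
    _ ≤ ∑ i ∈ syndromeSupport H X, hammingNorm (H *ᵥ X i) :=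
      sum_le_sum fun _ hi => hammingNorm_pos_iff.2 (mem_filter.1 hi).2
    _ ≤ _ := sum_le_sum_of_subset (subset_univ _)

variable [DecidableEq ι]

theorem syndromeSupport_updateRow_zero (i₀ : ι) :
    syndromeSupport H (X.updateRow i₀ 0) = (syndromeSupport H X).erase i₀ := by
  ext i
  by_cases h : i = i₀
  · subst h
    simp [syndromeSupport]
  · simp [syndromeSupport, h]

variable [DecidableEq κ]

theorem mulVec_mul_apply_of_mem_uniqueNeighbors {i₀ : ι} {j : κ}
    (hj : j ∈ uniqueNeighbors (colSupport M) (syndromeSupport H X) i₀) :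
    H *ᵥ (M * X) j = M j i₀ • H *ᵥ X i₀ := by
  rw [mulVec_mul_apply, sum_eq_single i₀ _ (fun h => absurd (mem_univ i₀) h)]
  intro i _ hi
  by_cases hsyn : H *ᵥ X i = 0
  · rw [hsyn, smul_zero]
  · have : M j i = 0 := by
      simp only [uniqueNeighbors, colSupport, syndromeSupport, mem_sdiff, mem_biUnion, mem_erase,
        mem_filter, mem_univ, true_and, not_exists, not_and, not_not] at hj
      exact hj.2 i ⟨hi, hsyn⟩
    rw [this, zero_smul]

theorem sum_reducedWeight_mul_updateRow_zero_add_le {i₀ : ι}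
    (hU : #(colSupport M i₀) < 2 * #(uniqueNeighbors (colSupport M) (syndromeSupport H X) i₀)) :
    ∑ j, reducedWeight H ((M * X.updateRow i₀ 0) j) + reducedWeight H (X i₀) ≤
      ∑ j, reducedWeight H ((M * X) j) := by
  set U := uniqueNeighbors (colSupport M) (syndromeSupport H X) i₀
  set ρ₀ := reducedWeight H (X i₀)
  have hpoint : ∀ j,
      reducedWeight H ((M * X.updateRow i₀ 0) j) + (if j ∈ U then 2 * ρ₀ else 0) ≤
        reducedWeight H ((M * X) j) + (if j ∈ colSupport M i₀ then ρ₀ else 0) := by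
    intro j
    rw [mul_updateRow_zero_apply]
    by_cases hjU : j ∈ U
    · have hjA : j ∈ colSupport M i₀ := sdiff_subset hjU
      have hsyn := mulVec_mul_apply_of_mem_uniqueNeighbors M X hjU
      have hc : M j i₀ ≠ 0 := (mem_filter.1 hjA).2
      rw [if_pos hjU, if_pos hjA,
        reducedWeight_eq_zero (by rw [mulVec_sub, mulVec_smul, hsyn, sub_self]),
        reducedWeight_congr (hsyn.trans (mulVec_smul _ _ _).symm), reducedWeight_smul hc]
      omega
    rw [if_neg hjU, add_zero]
    by_cases hjA : j ∈ colSupport M i₀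
    · rw [if_pos hjA]
      exact reducedWeight_sub_smul_le _ _ _
    · have : M j i₀ = 0 := by simpa [colSupport] using hjA
      simp [this]
  have hsum := sum_le_sum fun j (_ : j ∈ univ) => hpoint j
  simp only [sum_add_distrib, sum_ite_mem, univ_inter, sum_const, smul_eq_mul] at hsum
  nlinarith [Nat.mul_le_mul_right ρ₀ hU]

theorem sum_reducedWeight_le_sum_reducedWeight_mul {δ : ℝ} (hδ : δ < 1 / 4) {Δ : ℕ}
    (hΔ : 0 < Δ) (hreg : ∀ i, #(colSupport M i) = Δ) (X : Matrix ι n K)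
    (hexp : ∀ T ⊆ syndromeSupport H X, (1 - δ) * Δ * #T ≤ #(T.biUnion (colSupport M))) :
    ∑ i, reducedWeight H (X i) ≤ ∑ j, reducedWeight H ((M * X) j) := by
  induction hT : syndromeSupport H X using Finset.strongInduction generalizing X with
  | H T ih =>
  rcases T.eq_empty_or_nonempty with rfl | hne
  · rw [sum_reducedWeight_eq_zero X hT]
    exact Nat.zero_le _
  obtain ⟨i₀, hi₀, hU⟩ := exists_lt_two_mul_card_uniqueNeighbors (colSupport M) T hδ hΔ
    (fun i _ => hreg i) hne (hexp T hT.ge)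
  subst hT
  have hsupp := syndromeSupport_updateRow_zero (H := H) X i₀
  have := ih _ (hsupp ▸ erase_ssubset hi₀) (X.updateRow i₀ 0)
    (fun T hT => hexp T (hT.trans (hsupp ▸ erase_subset _ _))) hsupp
  have := sum_reducedWeight_mul_updateRow_zero_add_le M X (hreg i₀ ▸ hU)
  have := sum_reducedWeight_updateRow_zero H X i₀
  omega

end Syndrome

noncomputable def minDistance {ι κ K : Type*} [Fintype ι] [Field K] [DecidableEq K]
    (M : Matrix κ ι K) : ℝ≥0∞ :=
  sInf {x | ∃ w, w ≠ 0 ∧ M *ᵥ w = 0 ∧ x = hammingNorm w}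

theorem minDistance_le_one_of_col_eq_zero {ι κ K : Type*} [Fintype ι] [DecidableEq ι] [Field K]
    [DecidableEq K] {M : Matrix κ ι K} {i : ι} (h : M.col i = 0) : minDistance M ≤ 1 := by
  have hmem : ((hammingNorm (Pi.single i 1 : ι → K) : ℕ) : ℝ≥0∞) ∈
      {x : ℝ≥0∞ | ∃ w : ι → K, w ≠ 0 ∧ M *ᵥ w = 0 ∧ x = hammingNorm w} :=
    ⟨Pi.single i 1, Pi.single_ne_zero_iff.2 one_ne_zero, by rw [mulVec_single_one, h], rfl⟩
  calc minDistance M ≤ hammingNorm (Pi.single i 1 : ι → K) := sInf_le hmem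
    _ = 1 := by rw [hammingNorm_pi_single i one_ne_zero, Nat.cast_one]

/-- **"Soundness" of hypergraph-product codes (Lemma: HGP_soundness).**
Let `H₁ ∈ F₂^{r₁×n₁}`, `H₂ ∈ F₂^{r₂×n₂}`, with `H₁ᵀ` a `(γ,δ)`-expander (`δ < 1/4`,
column-regular of degree `Δ`).  For `D̃_Z = (H₁ ⊗ I_{n₂} | I_{r₁} ⊗ H₂ᵀ)` and any
`h ∈ F₂^{r₁ n₂}`, the vector `f = D̃_Zᵀ h` (whose two components are
`(H₁ᵀ ⊗ I_{n₂}) h` and `(I_{r₁} ⊗ H₂) h`) satisfies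
`|f| ≥ min{ |h|ʳ_{I_{r₁}⊗H₂}, d(H₁ᵀ), γ·r₁ }`,
where the classical distance `d(H₁ᵀ)` is `+∞` when `H₁ᵀ` has trivial kernel. -/
theorem stmt_6 (r₁ n₁ r₂ n₂ : ℕ)
    (H₁ : Matrix (Fin r₁) (Fin n₁) (ZMod 2))
    (H₂ : Matrix (Fin r₂) (Fin n₂) (ZMod 2))
    (γ δ : ℝ) (hδ : δ < 1 / 4) (Δ : ℕ)
    (hreg : ∀ j : Fin r₁, hammingNorm (fun i : Fin n₁ => H₁ᵀ i j) = Δ)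
    (hexp : ∀ S : Finset (Fin r₁), (S.card : ℝ) ≤ γ * r₁ →
      (1 - δ) * Δ * S.card ≤ (({i : Fin n₁ | ∃ j ∈ S, H₁ᵀ i j ≠ 0} : Set (Fin n₁)).ncard : ℝ))
    (h : Fin r₁ × Fin n₂ → ZMod 2) :
    min (min
        (((sInf {w : ℕ | ∃ h' : Fin r₁ × Fin n₂ → ZMod 2,
          ((1 : Matrix (Fin r₁) (Fin r₁) (ZMod 2)) ⊗ₖ H₂).mulVec h' =
            ((1 : Matrix (Fin r₁) (Fin r₁) (ZMod 2)) ⊗ₖ H₂).mulVec h ∧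
          hammingNorm h' = w} : ℕ) : ℝ≥0∞))
        (sInf {x : ℝ≥0∞ | ∃ w : Fin r₁ → ZMod 2,
          w ≠ 0 ∧ H₁ᵀ.mulVec w = 0 ∧ x = (hammingNorm w : ℝ≥0∞)}))
      (ENNReal.ofReal (γ * r₁)) ≤
    ((hammingNorm ((H₁ᵀ ⊗ₖ (1 : Matrix (Fin n₂) (Fin n₂) (ZMod 2))).mulVec h) +
      hammingNorm (((1 : Matrix (Fin r₁) (Fin r₁) (ZMod 2)) ⊗ₖ H₂).mulVec h) : ℕ) : ℝ≥0∞) := by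
  set X : Matrix (Fin r₁) (Fin n₂) (ZMod 2) := of (Function.curry h)
  have hX : vec Xᵀ = h := rfl
  have hred := reducedWeight_one_kronecker_vec_le H₂ X
  have hB := card_syndromeSupport_le (H := H₂) X
  rw [← hX, hammingNorm_kronecker_one_mulVec_vec, hammingNorm_one_kronecker_mulVec_vec]
  rcases (syndromeSupport H₂ X).eq_empty_or_nonempty with hT | ⟨i₀, hi₀⟩
  · rw [sum_reducedWeight_eq_zero X hT] at hred
    exact min_le_of_left_le (min_le_of_left_le (by exact_mod_cast hred.trans (Nat.zero_le _)))
  have hTpos := card_pos.2 ⟨i₀, hi₀⟩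
  obtain rfl | hΔ := Nat.eq_zero_or_pos Δ
  · refine min_le_of_left_le (min_le_of_right_le
      ((minDistance_le_one_of_col_eq_zero (hammingNorm_eq_zero.1 (hreg i₀))).trans ?_))
    exact_mod_cast (by omega : 1 ≤ _)
  by_cases hγ : (#(syndromeSupport H₂ X) : ℝ) ≤ γ * r₁
  · have hexp' : ∀ S ⊆ syndromeSupport H₂ X,
        (1 - δ) * Δ * #S ≤ #(S.biUnion (colSupport H₁ᵀ)) := fun S hS => by
      simpa only [← coe_biUnion_colSupport, Set.ncard_coe_finset] using
        hexp S ((Nat.cast_le.2 (card_le_card hS)).trans hγ)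
    have hA := sum_reducedWeight_le_sum_reducedWeight_mul H₁ᵀ hδ hΔ hreg X hexp'
    have hρ := sum_le_sum fun j (_ : j ∈ univ) =>
      reducedWeight_le_hammingNorm (H := H₂) ((H₁ᵀ * X) j)
    exact min_le_of_left_le (min_le_of_left_le
      (by exact_mod_cast (hred.trans (hA.trans hρ)).trans (Nat.le_add_right _ _)))
  · refine min_le_of_right_le (ENNReal.ofReal_le_of_le_toReal ?_)
    rw [ENNReal.toReal_natCast]
    exact (not_le.1 hγ).le.trans (Nat.cast_le.2 (hB.trans (Nat.le_add_left _ _)))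
end

section
/- Let H_C ∈ F_2^{σ_C×n_C} have full row rank and nontrivial kernel, with d_C := min{ |x| : x ∈ F_2^{n_C}, x ≠ 0, H_C x = 0 }, and let H_X ∈ F_2^{σ_X×n} be arbitrary. Define D_X = ( I_{σ_C} ⊗ H_X | H_C ⊗ I_{σ_X} ) ∈ F_2^{(σ_C σ_X)×(σ_C n + n_C σ_X)} and D̃_Z = ( H_C^T ⊗ I_n | I_{n_C} ⊗ H_X^T ) ∈ F_2^{(n_C n)×(σ_C n + n_C σ_X)}. Then every f ∈ F_2^{σ_C n + n_C σ_X} with D_X f = 0 and |f| < d_C lies in the image of D̃_Z^T; that is, the Z-distance of the hypergraph product code with X-check matrix D_X and Z-check matrix D̃_Z is at least d_C. -/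
open Matrix Kronecker

/-!
Write `f = (vec A, vec B)` (`Matrix.vec` stacks columns). Then `D_X f = 0` says `H_X A = B H_Cᵀ`,
and `f = D̃_Zᵀ (vec H)` says `H H_Cᵀ = A` and `H_X H = B`. If `z H_X = 0`, then `w = z B`
satisfies `H_C w = z H_X A = 0` and `|w| ≤ |B| ≤ |f| < d_C`, so `w = 0`. Hence the left kernel
of `H_X` lies in that of `B`, i.e. `B = H_X H₀` for some `H₀`. As `H_C` has a right inverse `K`,
the correction `H = H₀ + (A - H₀ H_Cᵀ) Kᵀ` achieves `H H_Cᵀ = A` and still satisfies `H_X H = B`.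
-/

theorem LinearMap.exists_comp_eq_of_ker_le {K V W U : Type*} [Field K]
    [AddCommGroup V] [Module K V] [AddCommGroup W] [Module K W] [AddCommGroup U] [Module K U]
    (f : V →ₗ[K] W) (g : V →ₗ[K] U) (h : ker f ≤ ker g) : ∃ φ : W →ₗ[K] U, φ ∘ₗ f = g := by
  obtain ⟨φ, hφ⟩ := LinearMap.exists_extend
    ((ker f).liftQ g h ∘ₗ (f.quotKerEquivRange.symm : range f →ₗ[K] V ⧸ ker f))
  refine ⟨φ, LinearMap.ext fun v => ?_⟩
  simpa using LinearMap.congr_fun hφ ⟨f v, mem_range_self f v⟩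

section Field

variable {F : Type*} [Field F] {k l m n p : Type*}

theorem Matrix.exists_mul_eq_of_ker_le [Fintype m] [Fintype n]
    (N : Matrix m n F) (B : Matrix k n F)
    (h : ∀ z, N *ᵥ z = 0 → B *ᵥ z = 0) : ∃ X : Matrix k m F, X * N = B := by
  classical
  obtain ⟨φ, hφ⟩ := LinearMap.exists_comp_eq_of_ker_le N.mulVecLin B.mulVecLin fun z => h z
  refine ⟨LinearMap.toMatrix' φ, Matrix.toLin'.injective ?_⟩
  rw [Matrix.toLin'_mul, Matrix.toLin'_toMatrix', Matrix.toLin'_apply', Matrix.toLin'_apply', hφ]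

theorem Matrix.exists_mul_eq_one_of_linearIndependent_row [Fintype m] [Fintype n] [DecidableEq m]
    (M : Matrix m n F) (hM : LinearIndependent F M.row) : ∃ K : Matrix n m F, M * K = 1 := by
  obtain ⟨X, hX⟩ := Mᵀ.exists_mul_eq_of_ker_le (1 : Matrix m m F) fun z hz => by
    rw [mulVec_transpose, ← zero_vecMul M] at hz
    rw [Matrix.vecMul_injective_iff.mpr hM hz, mulVec_zero]
  exact ⟨Xᵀ, by rw [← transpose_transpose M, ← transpose_mul, hX, transpose_one]⟩

theorem Matrix.exists_mul_eq_and_mul_eq [Fintype k] [Fintype l] [Fintype m] [Fintype p]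
    [DecidableEq l]
    {P : Matrix k l F} {Q : Matrix p m F} {A : Matrix m l F} {B : Matrix p k F}
    (hP : ∃ L : Matrix l k F, L * P = 1) (hB : ∀ z, z ᵥ* Q = 0 → z ᵥ* B = 0)
    (hQAB : Q * A = B * P) : ∃ H : Matrix m k F, H * P = A ∧ Q * H = B := by
  obtain ⟨L, hL⟩ := hP
  obtain ⟨X, hX⟩ := Qᵀ.exists_mul_eq_of_ker_le Bᵀ fun z hz => by
    rw [mulVec_transpose] at hz ⊢
    exact hB z hz
  have hQX : Q * Xᵀ = B := by rw [← transpose_transpose Q, ← transpose_mul, hX, transpose_transpose]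
  refine ⟨Xᵀ + (A - Xᵀ * P) * L, ?_, ?_⟩
  · rw [Matrix.add_mul, Matrix.mul_assoc, hL, Matrix.mul_one, add_sub_cancel]
  · rw [Matrix.mul_add, ← Matrix.mul_assoc, Matrix.mul_sub, hQAB, ← Matrix.mul_assoc, hQX,
      sub_self, Matrix.zero_mul, add_zero]

end Field

theorem hammingNorm_sumElim {ι κ β : Type*} [Fintype ι] [Fintype κ] [Zero β] [DecidableEq β]
    (x : ι → β) (y : κ → β) : hammingNorm (Sum.elim x y) = hammingNorm x + hammingNorm y := by
  simp only [hammingNorm, Finset.card_filter, Fintype.sum_sum_type, Sum.elim_inl, Sum.elim_inr]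
  rfl

theorem Matrix.hammingNorm_vecMul_le {R m n : Type*} [NonUnitalNonAssocSemiring R] [DecidableEq R]
    [Fintype m] [Fintype n] [DecidableEq n] (z : m → R) (B : Matrix m n R) :
    hammingNorm (z ᵥ* B) ≤ hammingNorm (vec B) := by
  refine (Finset.card_le_card fun j hj => ?_).trans (Finset.card_image_le (f := Prod.fst))
  obtain ⟨i, -, hi⟩ := Finset.exists_ne_zero_of_sum_ne_zero (Finset.mem_filter.mp hj).2
  exact Finset.mem_image.mpr
    ⟨(j, i), Finset.mem_filter.mpr ⟨Finset.mem_univ _, right_ne_zero_of_mul hi⟩, rfl⟩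

theorem Matrix.eq_zero_of_mulVec_eq_zero_of_hammingNorm_lt {R m n : Type*} [Semiring R]
    [DecidableEq R] [Fintype m] [Fintype n] (M : Matrix m n R) {x : n → R} (hx : M *ᵥ x = 0)
    (hw : hammingNorm x < sInf {w | ∃ x : n → R, x ≠ 0 ∧ M *ᵥ x = 0 ∧ hammingNorm x = w}) :
    x = 0 := by
  by_contra hx0
  exact hw.not_ge (Nat.sInf_le ⟨x, hx0, hx, rfl⟩)

theorem stmt_7_general (σC nC σX n : ℕ)
    (HC : Matrix (Fin σC) (Fin nC) (ZMod 2))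
    (HX : Matrix (Fin σX) (Fin n) (ZMod 2))
    (hrank : LinearIndependent (ZMod 2) (fun i : Fin σC => HC i))
    (f : (Fin σC × Fin n) ⊕ (Fin nC × Fin σX) → ZMod 2)
    (hf0 : (Matrix.fromCols
        ((1 : Matrix (Fin σC) (Fin σC) (ZMod 2)) ⊗ₖ HX)
        (HC ⊗ₖ (1 : Matrix (Fin σX) (Fin σX) (ZMod 2)))).mulVec f = 0)
    (hfw : hammingNorm f <
      sInf {w | ∃ x : Fin nC → ZMod 2, x ≠ 0 ∧ HC.mulVec x = 0 ∧ hammingNorm x = w}) :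
    ∃ h : Fin nC × Fin n → ZMod 2,
      (Matrix.fromCols
        (HCᵀ ⊗ₖ (1 : Matrix (Fin n) (Fin n) (ZMod 2)))
        ((1 : Matrix (Fin nC) (Fin nC) (ZMod 2)) ⊗ₖ HXᵀ))ᵀ.mulVec h = f := by
  obtain ⟨A, B, rfl⟩ : ∃ (A : Matrix (Fin n) (Fin σC) (ZMod 2))
      (B : Matrix (Fin σX) (Fin nC) (ZMod 2)), f = Sum.elim (vec A) (vec B) :=
    ⟨of fun j i => f (.inl (i, j)), of fun s c => f (.inr (c, s)), by ext (⟨i, j⟩ | ⟨c, s⟩) <;> rfl⟩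
  have hAB : HX * A = B * HCᵀ := by
    rw [fromCols_mulVec, Sum.elim_comp_inl, Sum.elim_comp_inr, kronecker_mulVec_vec,
      kronecker_mulVec_vec, transpose_one, Matrix.mul_one, Matrix.one_mul, ← vec_add,
      vec_eq_zero_iff] at hf0
    ext i j
    exact CharTwo.add_eq_zero.mp (congrFun₂ hf0 i j)
  have hB : ∀ z, z ᵥ* HX = 0 → z ᵥ* B = 0 := fun z hz =>
    HC.eq_zero_of_mulVec_eq_zero_of_hammingNorm_lt
      (by rw [← vecMul_transpose, vecMul_vecMul, ← hAB, ← vecMul_vecMul, hz, zero_vecMul])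
      ((B.hammingNorm_vecMul_le z).trans_lt (by rw [hammingNorm_sumElim] at hfw; omega))
  obtain ⟨K, hK⟩ := HC.exists_mul_eq_one_of_linearIndependent_row hrank
  obtain ⟨H, hHA, hHB⟩ :=
    exists_mul_eq_and_mul_eq ⟨Kᵀ, by rw [← transpose_mul, hK, transpose_one]⟩ hB hAB
  refine ⟨vec H, ?_⟩
  rw [transpose_fromCols, fromRows_mulVec, ← kroneckerMap_transpose, ← kroneckerMap_transpose,
    transpose_transpose, transpose_one, transpose_one, transpose_transpose, kronecker_mulVec_vec,
    kronecker_mulVec_vec, transpose_one, Matrix.mul_one, Matrix.one_mul, hHA, hHB]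

/-- **Z-distance of the BSE hypergraph-product code (Theorem: formal BSE, structural core).**
Let `H_C ∈ F₂^{σ_C×n_C}` have full row rank (linearly independent rows) and nontrivial
kernel, with classical distance `d_C`, and let `H_X ∈ F₂^{σ_X×n}` be arbitrary.  With
`D_X = (I_{σ_C} ⊗ H_X | H_C ⊗ I_{σ_X})` and `D̃_Z = (H_Cᵀ ⊗ I_n | I_{n_C} ⊗ H_Xᵀ)`,
every `f` with `D_X f = 0` and `|f| < d_C` lies in the image of `D̃_Zᵀ`; i.e. the
Z-distance of the hypergraph-product code `(D_X, D̃_Z)` is at least `d_C`. -/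
theorem stmt_7 (σC nC σX n : ℕ)
    (HC : Matrix (Fin σC) (Fin nC) (ZMod 2))
    (HX : Matrix (Fin σX) (Fin n) (ZMod 2))
    (hrank : LinearIndependent (ZMod 2) (fun i : Fin σC => HC i))
    (hker : ∃ x : Fin nC → ZMod 2, x ≠ 0 ∧ HC.mulVec x = 0)
    (f : (Fin σC × Fin n) ⊕ (Fin nC × Fin σX) → ZMod 2)
    (hf0 : (Matrix.fromCols
        ((1 : Matrix (Fin σC) (Fin σC) (ZMod 2)) ⊗ₖ HX)
        (HC ⊗ₖ (1 : Matrix (Fin σX) (Fin σX) (ZMod 2)))).mulVec f = 0)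
    (hfw : hammingNorm f <
      sInf {w | ∃ x : Fin nC → ZMod 2, x ≠ 0 ∧ HC.mulVec x = 0 ∧ hammingNorm x = w}) :
    ∃ h : Fin nC × Fin n → ZMod 2,
      (Matrix.fromCols
        (HCᵀ ⊗ₖ (1 : Matrix (Fin n) (Fin n) (ZMod 2)))
        ((1 : Matrix (Fin nC) (Fin nC) (ZMod 2)) ⊗ₖ HXᵀ))ᵀ.mulVec h = f :=
  stmt_7_general σC nC σX n HC HX hrank f hf0 hfw
end

section
/- Let H_X ∈ F_2^{r_X×n}, H_Z ∈ F_2^{s_Z×n} with H_Z H_X^T = 0, let H_X' ∈ F_2^{r_X'×n'}, ∂_1 ∈ F_2^{n_A×r_A}, f_1 ∈ F_2^{n×r_A}, f_1' ∈ F_2^{n'×r_A}. Assume: (a) every row and every column of f_1 has at most one nonzero entry; (b) for all w_A ∈ F_2^{r_A} and w_C ∈ F_2^{r_X'}, one has |∂_1 w_A| + |f_1' w_A + (H_X')^T w_C| ≥ |w_A| (i.e., the relative Cheeger constant of H_g = [[∂_1, 0],[f_1', (H_X')^T]] with respect to its first block of columns is at least 1). Then for every L_B ∈ F_2^n with H_Z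 L_B = 0 and L_B ∉ im(H_X^T), and for all w_B ∈ F_2^{r_X}, w_A ∈ F_2^{r_A}, w_C ∈ F_2^{r_X'}: |L_B + H_X^T w_B + f_1 w_A| + |∂_1 w_A| + |f_1' w_A + (H_X')^T w_C| ≥ d_X, where d_X := min{|u| : H_Z u = 0, u ∉ im(H_X^T)}. Hence every X-logical operator of the merged (cone) code represented on the first code block retains weight at least the X-distance d_X of the first CSS code. -/
/-!
Adding a stabilizer `H_Xᵀ w_B` to a logical operator `L_B` gives another logical operator, so
`|L_B + H_Xᵀ w_B| ≥ d_X`. Adding `f₁ w_A` can lower the weight by at most `|f₁ w_A|`, which is at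
most `|w_A|` because every column of `f₁` has weight at most one; the Cheeger condition bounds
`|w_A|` by the weight `|∂₁ w_A| + |f₁' w_A + H_X'ᵀ w_C|` carried by the other two blocks.
-/

open Matrix Finset

theorem hammingNorm_le_hammingNorm_add_add {ι : Type*} [Fintype ι] {β : ι → Type*}
    [∀ i, AddCommGroup (β i)] [∀ i, DecidableEq (β i)] (x y : ∀ i, β i) :
    hammingNorm x ≤ hammingNorm (x + y) + hammingNorm y :=
  calc hammingNorm x = hammingDist (x + y) y := by
        rw [hammingDist_comm, hammingDist_eq_hammingNorm, add_comm x, neg_add_cancel_left]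
    _ ≤ hammingDist (x + y) 0 + hammingDist 0 y := hammingDist_triangle _ _ _
    _ = hammingNorm (x + y) + hammingNorm y := by
        rw [hammingDist_zero_right, hammingDist_zero_left]

theorem hammingNorm_mulVec_le {m n R : Type*} [Fintype m] [Fintype n]
    [NonUnitalNonAssocSemiring R] [DecidableEq R] (A : Matrix m n R)
    (hcol : ∀ j, hammingNorm (fun i => A i j) ≤ 1) (w : n → R) :
    hammingNorm (A *ᵥ w) ≤ hammingNorm w := by
  classical
  have hsupport : ({i | (A *ᵥ w) i ≠ 0} : Finset m) ⊆
      ({j | w j ≠ 0} : Finset n).biUnion fun j => {i | A i j ≠ 0} := by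
    intro i hi
    simp only [mem_filter, mem_univ, true_and] at hi
    obtain ⟨j, -, hj⟩ := exists_ne_zero_of_sum_ne_zero hi
    simp only [mem_biUnion, mem_filter, mem_univ, true_and]
    exact ⟨j, right_ne_zero_of_mul hj, left_ne_zero_of_mul hj⟩
  calc hammingNorm (A *ᵥ w)
      ≤ #(({j | w j ≠ 0} : Finset n).biUnion fun j => {i | A i j ≠ 0}) := card_le_card hsupport
    _ ≤ ∑ j ∈ {j | w j ≠ 0}, #{i | A i j ≠ 0} := card_biUnion_le
    _ ≤ ∑ j ∈ {j | w j ≠ 0}, 1 := sum_le_sum fun j _ => hcol j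
    _ = hammingNorm w := by rw [sum_const, smul_eq_mul, mul_one]; rfl

def IsXLogical {m n s R : Type*} [Fintype m] [Fintype n] [Semiring R]
    (HX : Matrix m n R) (HZ : Matrix s n R) (u : n → R) : Prop :=
  HZ *ᵥ u = 0 ∧ ¬ ∃ v, HXᵀ *ᵥ v = u

theorem IsXLogical.add_mulVec_transpose {m n s R : Type*} [Fintype m] [Fintype n] [Ring R]
    {HX : Matrix m n R} {HZ : Matrix s n R} (hcss : HZ * HXᵀ = 0) {L : n → R}
    (hL : IsXLogical HX HZ L) (w : m → R) : IsXLogical HX HZ (L + HXᵀ *ᵥ w) := by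
  refine ⟨by rw [mulVec_add, hL.1, mulVec_mulVec, hcss, zero_mulVec, add_zero], ?_⟩
  rintro ⟨v, hv⟩
  exact hL.2 ⟨v - w, by rw [mulVec_sub, hv, add_sub_cancel_right]⟩

theorem stmt_9_general (n n' nA rA rX sZ rX' : ℕ)
    (HX : Matrix (Fin rX) (Fin n) (ZMod 2)) (HZ : Matrix (Fin sZ) (Fin n) (ZMod 2))
    (HX' : Matrix (Fin rX') (Fin n') (ZMod 2))
    (d1 : Matrix (Fin nA) (Fin rA) (ZMod 2))
    (f1 : Matrix (Fin n) (Fin rA) (ZMod 2))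
    (f1' : Matrix (Fin n') (Fin rA) (ZMod 2))
    (hcss : HZ * HXᵀ = 0)
    (hcol : ∀ j : Fin rA, hammingNorm (fun i : Fin n => f1 i j) ≤ 1)
    (hcheeger : ∀ (wA : Fin rA → ZMod 2) (wC : Fin rX' → ZMod 2),
      hammingNorm wA ≤
        hammingNorm (d1.mulVec wA) + hammingNorm (f1'.mulVec wA + HX'ᵀ.mulVec wC)) :
    ∀ LB : Fin n → ZMod 2, HZ.mulVec LB = 0 →
      (¬ ∃ w : Fin rX → ZMod 2, HXᵀ.mulVec w = LB) →
      ∀ (wB : Fin rX → ZMod 2) (wA : Fin rA → ZMod 2) (wC : Fin rX' → ZMod 2),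
        sInf {t | ∃ u : Fin n → ZMod 2, HZ.mulVec u = 0 ∧
            (¬ ∃ w : Fin rX → ZMod 2, HXᵀ.mulVec w = u) ∧ hammingNorm u = t}
          ≤ hammingNorm (LB + HXᵀ.mulVec wB + f1.mulVec wA)
            + hammingNorm (d1.mulVec wA)
            + hammingNorm (f1'.mulVec wA + HX'ᵀ.mulVec wC) := by
  intro LB hLB hlog wB wA wC
  have hlogical : IsXLogical HX HZ (LB + HXᵀ *ᵥ wB) :=
    IsXLogical.add_mulVec_transpose hcss ⟨hLB, hlog⟩ wB
  have hdist : sInf {t | ∃ u, HZ *ᵥ u = 0 ∧ (¬∃ w, HXᵀ *ᵥ w = u) ∧ hammingNorm u = t} ≤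
      hammingNorm (LB + HXᵀ *ᵥ wB) := Nat.sInf_le ⟨_, hlogical.1, hlogical.2, rfl⟩
  have hshift := hammingNorm_le_hammingNorm_add_add (LB + HXᵀ *ᵥ wB) (f1 *ᵥ wA)
  have hf1 := hammingNorm_mulVec_le f1 hcol wA
  have hA := hcheeger wA wC
  omega

/-- **X-distance of the merged (cone) code (Lemma: distance_merged_code, X part).**
Under the weight condition on `f₁` (rows and columns of weight ≤ 1) and the relative
Cheeger-constant condition `β(H_g, C_A) ≥ 1` for
`H_g = [[∂₁, 0],[f₁', H_X'ᵀ]]`, every X-logical `L_B` of the first CSS code keeps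
weight at least `d_X` after adding any merged-code X-stabilizer
`H̃_Xᵀ (w_B; w_A; w_C) = (H_Xᵀ w_B + f₁ w_A ; ∂₁ w_A ; f₁' w_A + H_X'ᵀ w_C)`. -/
theorem stmt_9 (n n' nA rA rX sZ rX' : ℕ)
    (HX : Matrix (Fin rX) (Fin n) (ZMod 2)) (HZ : Matrix (Fin sZ) (Fin n) (ZMod 2))
    (HX' : Matrix (Fin rX') (Fin n') (ZMod 2))
    (d1 : Matrix (Fin nA) (Fin rA) (ZMod 2))
    (f1 : Matrix (Fin n) (Fin rA) (ZMod 2))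
    (f1' : Matrix (Fin n') (Fin rA) (ZMod 2))
    (hcss : HZ * HXᵀ = 0)
    (hrow : ∀ i : Fin n, hammingNorm (f1 i) ≤ 1)
    (hcol : ∀ j : Fin rA, hammingNorm (fun i : Fin n => f1 i j) ≤ 1)
    (hcheeger : ∀ (wA : Fin rA → ZMod 2) (wC : Fin rX' → ZMod 2),
      hammingNorm wA ≤
        hammingNorm (d1.mulVec wA) + hammingNorm (f1'.mulVec wA + HX'ᵀ.mulVec wC)) :
    ∀ LB : Fin n → ZMod 2, HZ.mulVec LB = 0 →
      (¬ ∃ w : Fin rX → ZMod 2, HXᵀ.mulVec w = LB) →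
      ∀ (wB : Fin rX → ZMod 2) (wA : Fin rA → ZMod 2) (wC : Fin rX' → ZMod 2),
        sInf {t | ∃ u : Fin n → ZMod 2, HZ.mulVec u = 0 ∧
            (¬ ∃ w : Fin rX → ZMod 2, HXᵀ.mulVec w = u) ∧ hammingNorm u = t}
          ≤ hammingNorm (LB + HXᵀ.mulVec wB + f1.mulVec wA)
            + hammingNorm (d1.mulVec wA)
            + hammingNorm (f1'.mulVec wA + HX'ᵀ.mulVec wC) :=
  stmt_9_general n n' nA rA rX sZ rX' HX HZ HX' d1 f1 f1' hcss hcol hcheeger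
end

section
/- Let H_Z ∈ F_2^{s×n}, H_Z' ∈ F_2^{s'×n'}, ∂_1 ∈ F_2^{n_A×r_A}, f_1 ∈ F_2^{n×r_A}, f_0 ∈ F_2^{s×n_A}, f_1' ∈ F_2^{n'×r_A}, f_0' ∈ F_2^{s'×n_A} satisfy the commuting-square conditions H_Z f_1 = f_0 ∂_1 and H_Z' f_1' = f_0' ∂_1. Then for every v ∈ F_2^{r_A} with ∂_1 v = 0, every a ∈ im(H_Z^T) ⊆ F_2^n, every c ∈ im((H_Z')^T) ⊆ F_2^{n'}, and every b ∈ F_2^{n_A}, the F_2 inner product ⟨ f_1^T a + ∂_1^T b + (f_1')^T c , v ⟩ = 0. Consequently, in single-shot generalized lattice surgery through such an adapter, any residual data error whose restrictions to the two data codes act as Z-stabilizers does not flip the logical joint-measurement outcomes deduced from the products of adapter X-check syndromes indexed by ker(∂_1). -/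
open Matrix

/-- **Single-shot surgery: stabilizer-like residual errors do not flip logical
measurement outcomes.**
Given the commuting squares `H_Z f₁ = f₀ ∂₁` and `H_Z' f₁' = f₀' ∂₁` of a cone-code
(generalized lattice surgery) adapter, for every `v ∈ ker ∂₁`, every `a ∈ im H_Zᵀ`,
every `c ∈ im H_Z'ᵀ`, and every `b`, the F₂ inner product
`⟨f₁ᵀ a + ∂₁ᵀ b + f₁'ᵀ c, v⟩` vanishes. -/
theorem stmt_14 (n n' nA rA s s' : ℕ)
    (HZ : Matrix (Fin s) (Fin n) (ZMod 2))
    (HZ' : Matrix (Fin s') (Fin n') (ZMod 2))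
    (d1 : Matrix (Fin nA) (Fin rA) (ZMod 2))
    (f1 : Matrix (Fin n) (Fin rA) (ZMod 2))
    (f0 : Matrix (Fin s) (Fin nA) (ZMod 2))
    (f1' : Matrix (Fin n') (Fin rA) (ZMod 2))
    (f0' : Matrix (Fin s') (Fin nA) (ZMod 2))
    (hcomm : HZ * f1 = f0 * d1) (hcomm' : HZ' * f1' = f0' * d1) :
    ∀ v : Fin rA → ZMod 2, d1.mulVec v = 0 →
    ∀ a : Fin n → ZMod 2, (∃ u : Fin s → ZMod 2, HZᵀ.mulVec u = a) →
    ∀ c : Fin n' → ZMod 2, (∃ u : Fin s' → ZMod 2, HZ'ᵀ.mulVec u = c) →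
    ∀ b : Fin nA → ZMod 2,
      (∑ j, (f1ᵀ.mulVec a + d1ᵀ.mulVec b + f1'ᵀ.mulVec c) j * v j) = 0 := by
  rintro v hv a ⟨u, rfl⟩ c ⟨u', rfl⟩ b
  have key : ∀ {m : ℕ} (M : Matrix (Fin m) (Fin rA) (ZMod 2)) (w : Fin m → ZMod 2),
      Mᵀ.mulVec w ⬝ᵥ v = w ⬝ᵥ M.mulVec v := by
    intro m M w
    rw [Matrix.mulVec_transpose, ← Matrix.dotProduct_mulVec]
  show (_ + _ + _) ⬝ᵥ v = 0
  rw [add_dotProduct, add_dotProduct, key d1 b, hv]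
  have h1 : f1ᵀ.mulVec (HZᵀ.mulVec u) ⬝ᵥ v = 0 := by
    rw [Matrix.mulVec_mulVec, ← Matrix.transpose_mul, key, hcomm,
      ← Matrix.mulVec_mulVec, hv, Matrix.mulVec_zero, dotProduct_zero]
  have h2 : f1'ᵀ.mulVec (HZ'ᵀ.mulVec u') ⬝ᵥ v = 0 := by
    rw [Matrix.mulVec_mulVec, ← Matrix.transpose_mul, key, hcomm',
      ← Matrix.mulVec_mulVec, hv, Matrix.mulVec_zero, dotProduct_zero]
  rw [Matrix.mulVec_mulVec] at h1 h2
  simp [h1, h2]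
end
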